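/- arXiv:2408.13176 — 6 statements merged into one kernel-verified Lean document; each statement's English description precedes it below -/
import Mathlib

section
/- For every t ≥ 0 and every j ∈ J₁, the scaled occupation indicator satisfies H(t) 1{Z(t) = j} = Σ_{k ∈ J, k ≠ j} ∫_{(0,t]} H(s) N_{kj}(ds) − Σ_{k ∈ J₁, k ≠ j} ∫_{(0,t]} H(s) N_{jk}(ds), where each integral is the finite sum of H(s) over the jump times s ∈ (0,t] of the indicated type. -/
open Set

/-- `∫_{(0,t]} h(s) N_{jk}(ds)`: the (finite) sum of `h(s)` over the jump times `s ∈ (0,t]`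
of type `j → k` of the path `Z`, whose left-limit path is `Zm`. -/
noncomputable def jumpInt {J : Type*} (h : ℝ → ℝ) (Zm Z : ℝ → J) (j k : J) (t : ℝ) : ℝ :=
  ∑ᶠ s ∈ {s : ℝ | s ∈ Set.Ioc 0 t ∧ Zm s = j ∧ Z s = k}, h s

/-- The first hitting time `τ = inf{s > 0 : Z(s) ∈ J₁}` of `J₁ = J \ J₀`. -/
noncomputable def hitTime {J : Type*} [DecidableEq J] (J0 : Finset J) (Z : ℝ → J) : ℝ :=
  sInf {s : ℝ | 0 < s ∧ Z s ∉ J0}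

/-- The scaling factor `H(t) = ρ(τ, Z(τ−), Z(τ))^{1{τ ≤ t}}`; under the standing assumptions
(cadlag paths, `Z(0) = z₀ ∈ J₀`, `J₁` absorbing) one has `τ ≤ t` if and only if `Z(t) ∈ J₁`. -/
noncomputable def scaleH {J : Type*} [DecidableEq J] (J0 : Finset J) (ρ : ℝ → J → J → ℝ)
    (Zm Z : ℝ → J) (t : ℝ) : ℝ :=
  if Z t ∈ J0 then 1
  else ρ (hitTime J0 Z) (Zm (hitTime J0 Z)) (Z (hitTime J0 Z))

section aux

variable {J : Type*} {Z Zm : ℝ → J}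

lemma const_of_no_jump
    (hrc : ∀ s : ℝ, 0 ≤ s → ∃ ε > 0, ∀ u ∈ Set.Ico s (s + ε), Z u = Z s)
    (hll : ∀ s : ℝ, 0 < s → ∃ ε > 0, ∀ u ∈ Set.Ioo (s - ε) s, Z u = Zm s)
    {a b : ℝ} (ha : 0 ≤ a) (hab : a ≤ b)
    (hnoj : ∀ s ∈ Set.Ioc a b, Zm s = Z s) : Z b = Z a := by
  set A : Set ℝ := {u | u ∈ Set.Icc a b ∧ ∀ v ∈ Set.Icc a u, Z v = Z a} with hA
  have haA : a ∈ A := ⟨⟨le_refl a, hab⟩, fun v hv => by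
    have hva : v = a := le_antisymm hv.2 hv.1
    rw [hva]⟩
  have hbdd : BddAbove A := ⟨b, fun u hu => hu.1.2⟩
  have hne : A.Nonempty := ⟨a, haA⟩
  set c := sSup A with hc
  have hac : a ≤ c := le_csSup hbdd haA
  have hcb : c ≤ b := csSup_le hne (fun u hu => hu.1.2)
  have step1 : ∀ v ∈ Set.Ico a c, Z v = Z a := by
    intro v hv
    obtain ⟨u, huA, hvu⟩ := exists_lt_of_lt_csSup hne hv.2
    exact huA.2 v ⟨hv.1, le_of_lt hvu⟩
  have step2 : Z c = Z a := by
    rcases eq_or_lt_of_le hac with h | h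
    · rw [← h]
    · have hc0 : 0 < c := lt_of_le_of_lt ha h
      obtain ⟨ε, hε, hZ⟩ := hll c hc0
      set v := (max a (c - ε) + c) / 2 with hv
      have hv1 : max a (c - ε) < c := max_lt h (by linarith)
      have hvlt : v < c := by rw [hv]; linarith
      have hvgt : max a (c - ε) < v := by rw [hv]; linarith
      have hva : a ≤ v := le_of_lt (lt_of_le_of_lt (le_max_left _ _) hvgt)
      have h1 : Z v = Zm c := hZ v ⟨lt_of_le_of_lt (le_max_right _ _) hvgt, hvlt⟩
      have h3 : Zm c = Z c := hnoj c ⟨h, hcb⟩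
      rw [← h3, ← h1, step1 v ⟨hva, hvlt⟩]
  have hcbe : c = b := by
    by_contra hne'
    have hclt : c < b := lt_of_le_of_ne hcb hne'
    obtain ⟨ε, hε, hZ⟩ := hrc c (le_trans ha hac)
    set u := min b (c + ε / 2) with hu
    have huc : c < u := lt_min hclt (by linarith)
    have huA : u ∈ A := by
      refine ⟨⟨le_trans hac (le_of_lt huc), min_le_left _ _⟩, fun v hv => ?_⟩
      rcases lt_or_ge v c with h | h
      · exact step1 v ⟨hv.1, h⟩
      · have hvc : Z v = Z c := hZ v ⟨h, by
          have : v ≤ c + ε / 2 := le_trans hv.2 (min_le_right _ _)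
          linarith⟩
        rw [hvc, step2]
    exact absurd (le_csSup hbdd huA) (not_le.mpr huc)
  rw [← hcbe, step2]

lemma telescope_aux
    (hrc : ∀ s : ℝ, 0 ≤ s → ∃ ε > 0, ∀ u ∈ Set.Ico s (s + ε), Z u = Z s)
    (hll : ∀ s : ℝ, 0 < s → ∃ ε > 0, ∀ u ∈ Set.Ioo (s - ε) s, Z u = Zm s)
    (hfin : ∀ t : ℝ, {s : ℝ | s ∈ Set.Ioc 0 t ∧ Zm s ≠ Z s}.Finite)
    (χ : J → ℝ) :
    ∀ n : ℕ, ∀ t : ℝ, 0 ≤ t → (hfin t).toFinset.card = n →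
      ∑ s ∈ (hfin t).toFinset, (χ (Z s) - χ (Zm s)) = χ (Z t) - χ (Z 0) := by
  intro n
  induction n with
  | zero =>
    intro t ht hcard
    have hF : (hfin t).toFinset = ∅ := Finset.card_eq_zero.mp hcard
    have hconst : Z t = Z 0 := by
      refine const_of_no_jump hrc hll le_rfl ht (fun s hs => ?_)
      by_contra h
      have hsF : s ∈ (hfin t).toFinset := (hfin t).mem_toFinset.mpr ⟨hs, h⟩
      rw [hF] at hsF; simp at hsF
    rw [hF]; simp [hconst]
  | succ n ih =>
    intro t ht hcard
    have hFne : (hfin t).toFinset.Nonempty := Finset.card_pos.mp (by omega)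
    set F := (hfin t).toFinset with hF
    set m := F.max' hFne with hm
    have hmF : m ∈ F := F.max'_mem hFne
    have hmJ : m ∈ Set.Ioc 0 t ∧ Zm m ≠ Z m := (hfin t).mem_toFinset.mp hmF
    set F' := F.erase m with hF'
    set M := (insert (0:ℝ) F').max' (Finset.insert_nonempty _ _) with hM
    have hM0 : 0 ≤ M := Finset.le_max' _ 0 (Finset.mem_insert_self _ _)
    have hMmem : M ∈ insert (0:ℝ) F' := Finset.max'_mem _ _
    have hMm : M < m := by
      rcases Finset.mem_insert.mp hMmem with h | h
      · rw [h]; exact hmJ.1.1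
      · exact lt_of_le_of_ne (Finset.le_max' F M (Finset.mem_of_mem_erase h))
          (Finset.ne_of_mem_erase h)
    set u := (M + m) / 2 with hu
    have hu1 : M < u := by rw [hu]; linarith
    have hu2 : u < m := by rw [hu]; linarith
    have hu0 : 0 < u := lt_of_le_of_lt hM0 hu1
    have hut : u ≤ t := le_of_lt (lt_of_lt_of_le hu2 hmJ.1.2)
    have hleM : ∀ s ∈ F, s ≠ m → s ≤ M := by
      intro s hs hsm
      exact Finset.le_max' _ s (Finset.mem_insert_of_mem (Finset.mem_erase.mpr ⟨hsm, hs⟩))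
    have hFu : (hfin u).toFinset = F' := by
      ext s
      rw [(hfin u).mem_toFinset, hF', Finset.mem_erase, hF, (hfin t).mem_toFinset]
      constructor
      · rintro ⟨⟨h0, hsu⟩, hj⟩
        exact ⟨ne_of_lt (lt_of_le_of_lt hsu hu2), ⟨⟨h0, le_trans hsu hut⟩, hj⟩⟩
      · rintro ⟨hsm, ⟨⟨h0, _⟩, hj⟩⟩
        have : s ≤ M := hleM s ((hfin t).mem_toFinset.mpr ⟨⟨h0, ‹_›⟩, hj⟩) hsm
        exact ⟨⟨h0, le_of_lt (lt_of_le_of_lt this hu1)⟩, hj⟩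
    have hcard' : (hfin u).toFinset.card = n := by
      rw [hFu, hF', Finset.card_erase_of_mem hmF]; omega
    have hIH := ih u (le_of_lt hu0) hcard'
    rw [hFu] at hIH
    -- no jumps in (m, t]
    have hZt : Z t = Z m := by
      refine const_of_no_jump hrc hll (le_of_lt hmJ.1.1) hmJ.1.2 (fun s hs => ?_)
      by_contra h
      have hsF : s ∈ F := (hfin t).mem_toFinset.mpr
        ⟨⟨lt_trans hmJ.1.1 hs.1, hs.2⟩, h⟩
      exact absurd (Finset.le_max' F s hsF) (not_le.mpr hs.1)
    -- Zm m = Z u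
    have hZmm : Zm m = Z u := by
      obtain ⟨ε, hε, hZ⟩ := hll m hmJ.1.1
      set v := (max u (m - ε) + m) / 2 with hv
      have hv1 : max u (m - ε) < m := max_lt hu2 (by linarith)
      have hvlt : v < m := by rw [hv]; linarith
      have hvgt : max u (m - ε) < v := by rw [hv]; linarith
      have huv : u < v := lt_of_le_of_lt (le_max_left _ _) hvgt
      have h1 : Z v = Zm m := hZ v ⟨lt_of_le_of_lt (le_max_right _ _) hvgt, hvlt⟩
      have h2 : Z v = Z u := by
        refine const_of_no_jump hrc hll (le_of_lt hu0) (le_of_lt huv) (fun s hs => ?_)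
        by_contra h
        have hsF : s ∈ F := (hfin t).mem_toFinset.mpr
          ⟨⟨lt_trans hu0 hs.1, le_trans hs.2 (le_of_lt (lt_of_lt_of_le hvlt hmJ.1.2))⟩, h⟩
        have hsm : s ≠ m := ne_of_lt (lt_of_le_of_lt hs.2 hvlt)
        exact absurd (hleM s hsF hsm) (not_le.mpr (lt_trans hu1 hs.1))
      rw [← h1, h2]
    have hsum : ∑ s ∈ F', (χ (Z s) - χ (Zm s)) + (χ (Z m) - χ (Zm m))
        = ∑ s ∈ F, (χ (Z s) - χ (Zm s)) := Finset.sum_erase_add F _ hmF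
    rw [← hsum, hIH, hZt, hZmm]
    ring

end aux

/-- For every `t ≥ 0` and `j ∈ J₁`,
`H(t) 1{Z(t) = j} = ∑_{k ∈ J, k ≠ j} ∫_{(0,t]} H(s) N_{kj}(ds)
  − ∑_{k ∈ J₁, k ≠ j} ∫_{(0,t]} H(s) N_{jk}(ds)`. -/
theorem scaled_occupation_indicator_identity_post_exercise
    {J : Type*} [Fintype J] [DecidableEq J] (z0 : J) (J0 : Finset J) (Z Zm : ℝ → J)
    (hz0 : z0 ∈ J0)
    (hZ0 : Z 0 = z0)
    (hrc : ∀ s : ℝ, 0 ≤ s → ∃ ε > 0, ∀ u ∈ Set.Ico s (s + ε), Z u = Z s)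
    (hll : ∀ s : ℝ, 0 < s → ∃ ε > 0, ∀ u ∈ Set.Ioo (s - ε) s, Z u = Zm s)
    (hfin : ∀ t : ℝ, {s : ℝ | s ∈ Set.Ioc 0 t ∧ Zm s ≠ Z s}.Finite)
    (habs : ∀ s u : ℝ, 0 ≤ s → s ≤ u → Z s ∉ J0 → Z u ∉ J0)
    (ρ : ℝ → J → J → ℝ) (hρnn : ∀ t j k, 0 ≤ ρ t j k)
    (t : ℝ) (ht : 0 ≤ t) (j : J) (hj : j ∉ J0) :
    scaleH J0 ρ Zm Z t * (if Z t = j then (1 : ℝ) else 0)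
      = ∑ k ∈ Finset.univ.erase j, jumpInt (scaleH J0 ρ Zm Z) Zm Z k j t
        - ∑ k ∈ J0ᶜ.erase j, jumpInt (scaleH J0 ρ Zm Z) Zm Z j k t := by
  classical
  set c := ρ (hitTime J0 Z) (Zm (hitTime J0 Z)) (Z (hitTime J0 Z)) with hcdef
  set H := scaleH J0 ρ Zm Z with hH
  have hHc : ∀ s : ℝ, Z s ∉ J0 → H s = c := by
    intro s hs; simp [hH, scaleH, hs, hcdef]
  have habs' : ∀ s : ℝ, 0 < s → Zm s ∉ J0 → Z s ∉ J0 := by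
    intro s hs hzm
    obtain ⟨ε, hε, hZ⟩ := hll s hs
    set v := (max 0 (s - ε) + s) / 2 with hv
    have h1 : max 0 (s - ε) < s := max_lt hs (by linarith)
    have h2 : max 0 (s - ε) < v := by rw [hv]; linarith
    have h3 : v < s := by rw [hv]; linarith
    have h4 : 0 < v := lt_of_le_of_lt (le_max_left _ _) h2
    have h5 : Z v = Zm s := hZ v ⟨lt_of_le_of_lt (le_max_right _ _) h2, h3⟩
    exact habs v s (le_of_lt h4) (le_of_lt h3) (h5 ▸ hzm)
  set F := (hfin t).toFinset with hF
  have hmemF : ∀ s, s ∈ F ↔ s ∈ Set.Ioc 0 t ∧ Zm s ≠ Z s := fun s => (hfin t).mem_toFinset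
  have hjk : ∀ k k' : J, k ≠ k' → jumpInt H Zm Z k k' t
      = ∑ s ∈ F, if Zm s = k ∧ Z s = k' then H s else 0 := by
    intro k k' hkk'
    have hsub : {s : ℝ | s ∈ Set.Ioc 0 t ∧ Zm s = k ∧ Z s = k'}
        ⊆ {s : ℝ | s ∈ Set.Ioc 0 t ∧ Zm s ≠ Z s} := by
      rintro s ⟨h1, h2, h3⟩
      exact ⟨h1, by rw [h2, h3]; exact hkk'⟩
    have hfin' := (hfin t).subset hsub
    rw [jumpInt, finsum_mem_eq_finite_toFinset_sum _ hfin']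
    rw [← Finset.sum_filter]
    congr 1
    ext s
    rw [hfin'.mem_toFinset, Finset.mem_filter, hmemF]
    constructor
    · rintro ⟨h1, h2, h3⟩
      exact ⟨⟨h1, by rw [h2, h3]; exact hkk'⟩, h2, h3⟩
    · rintro ⟨⟨h1, _⟩, h2, h3⟩
      exact ⟨h1, h2, h3⟩
  have hA : ∑ k ∈ Finset.univ.erase j, jumpInt H Zm Z k j t
      = ∑ s ∈ F, (if Z s = j then c else 0) := by
    rw [Finset.sum_congr rfl (fun k hk => hjk k j (Finset.ne_of_mem_erase hk)),
      Finset.sum_comm]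
    refine Finset.sum_congr rfl fun s hs => ?_
    rw [hmemF] at hs
    by_cases hz : Z s = j
    · have hzm : Zm s ≠ j := fun h => hs.2 (h.trans hz.symm)
      have hHs : H s = c := hHc s (hz ▸ hj)
      rw [Finset.sum_eq_single_of_mem (Zm s)
        (Finset.mem_erase.mpr ⟨hzm, Finset.mem_univ _⟩)
        (fun k _ hk => if_neg (fun h => hk h.1.symm))]
      simp [hz, hHs]
    · simp [hz]
  have hB : ∑ k ∈ J0ᶜ.erase j, jumpInt H Zm Z j k t
      = ∑ s ∈ F, (if Zm s = j then c else 0) := by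
    rw [Finset.sum_congr rfl (fun k hk => hjk j k (Ne.symm (Finset.ne_of_mem_erase hk))),
      Finset.sum_comm]
    refine Finset.sum_congr rfl fun s hs => ?_
    rw [hmemF] at hs
    by_cases hzm : Zm s = j
    · have hzj : Z s ≠ j := fun h => hs.2 (hzm.trans h.symm)
      have hZs : Z s ∉ J0 := habs' s hs.1.1 (hzm ▸ hj)
      rw [Finset.sum_eq_single_of_mem (Z s)
        (Finset.mem_erase.mpr ⟨hzj, Finset.mem_compl.mpr hZs⟩)
        (fun k _ hk => if_neg (fun h => hk h.2.symm))]
      simp [hzm, hHc s hZs]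
    · simp [hzm]
  have htel := telescope_aux hrc hll hfin (fun x => if x = j then (1:ℝ) else 0) _ t ht rfl
  have hz0j : Z 0 ≠ j := by
    rw [hZ0]; exact fun h => hj (h ▸ hz0)
  rw [hA, hB, ← Finset.sum_sub_distrib]
  have hterm : ∀ s : ℝ, (if Z s = j then c else 0) - (if Zm s = j then c else 0)
      = c * ((if Z s = j then (1:ℝ) else 0) - (if Zm s = j then (1:ℝ) else 0)) := by
    intro s
    by_cases h1 : Z s = j <;> by_cases h2 : Zm s = j <;> simp [h1, h2]
  simp_rw [hterm]
  rw [← Finset.mul_sum, ← hF] at *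
  rw [htel]
  simp only [hz0j, if_neg hz0j, sub_zero]
  by_cases hzt : Z t = j
  · simp [hzt, hHc t (hzt ▸ hj)]
  · simp [hzt]
end

section
/- For every t ≥ 0 and every j ∈ J, the weighted occupation indicator satisfies H(t) 1{Z(t) = j} = 1{j = z₀} H(0) + Σ_{k ∈ J, k ≠ j} ∫_{(0,t]} H(s) N_{kj}(ds) − Σ_{k ∈ J, k ≠ j} ∫_{(0,t]} H(s) N_{jk}(ds) + ∫_{(0,t]} 1{Z(s−) = j} dH(s), where ∫ h N_{jk}(ds) is the finite sum of h(s) over jump times of type j→k in (0,t], and ∫_{(0,t]} 1{Z(s−) = j} dH(s) is the Lebesgue–Stieltjes integral with respect to the signed measure dH = dH₁ − dH₂. -/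
/-!
Between consecutive jumps the path is constant, so across an interval `(a, b]` with no interior
jump the left-limit path equals `Z a`, and both sides of the product formula
`φ (Z t) * H t = φ (Z 0) * H 0 + ∑_{jumps s ≤ t} H s * (φ (Z s) - φ (Z s-)) + ∫_{(0,t]} φ (Z s-) dH`
grow by `φ (Z a) * (H b - H a) + H b * (φ (Z b) - φ (Z a))`; induction over the finitely many
jumps in `(0, t]` proves it for every `φ : J → ℝ`. The theorem is the case `φ = 1{· = j}` for `H₁`
minus the same for `H₂`, because for every `s`
`∑_{k ≠ j} (1{Z(s-) = k, Z(s) = j} - 1{Z(s-) = j, Z(s) = k}) = 1{Z(s) = j} - 1{Z(s-) = j}`.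
-/

open Set MeasureTheory

open Filter Topology

@[elab_as_elim]
theorem nonneg_induction_on_gaps {E : Set ℝ} {P : ℝ → Prop} (h0 : P 0)
    (hstep : ∀ a b, 0 ≤ a → a ≤ b → (∀ s ∈ Ioo a b, s ∉ E) → P a → P b)
    {t : ℝ} (ht : 0 ≤ t) (hE : (Ioc 0 t ∩ E).Finite) : P t := by
  classical
  suffices ∀ S : Finset ℝ, ∀ t, 0 ≤ t → Ioc 0 t ∩ E = S → P t from
    this _ t ht hE.coe_toFinset.symm
  intro S
  induction S using Finset.induction_on_max with
  | empty =>
    refine fun t ht hS => hstep 0 t le_rfl ht (fun s hs hsE => ?_) h0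
    have hs' : s ∈ Ioc 0 t ∩ E := ⟨Ioo_subset_Ioc_self hs, hsE⟩
    rw [hS, Finset.coe_empty] at hs'
    exact hs'
  | insert a S hlt ih =>
    intro t ht hS
    have haE : a ∈ Ioc 0 t ∩ E := hS ▸ Finset.mem_coe.2 (Finset.mem_insert_self a S)
    set t' := (insert 0 S).max' (Finset.insert_nonempty 0 S)
    have ht'0 : 0 ≤ t' := Finset.le_max' _ _ (Finset.mem_insert_self 0 S)
    have ht'a : t' < a := (Finset.max'_lt_iff _ _).2 fun y hy => by
      rcases Finset.mem_insert.1 hy with rfl | hy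
      exacts [haE.1.1, hlt y hy]
    have hle : ∀ s ∈ Ioc 0 t ∩ E, s ≠ a → s ≤ t' := fun s hs hsa => by
      rw [hS, Finset.coe_insert, mem_insert_iff] at hs
      exact Finset.le_max' _ _ (Finset.mem_insert_of_mem (hs.resolve_left hsa))
    have hPt' : P t' := by
      refine ih t' ht'0 (Set.ext fun s => ⟨fun hs => ?_, fun hs => ?_⟩)
      · have hst : s ∈ Ioc 0 t ∩ E := ⟨⟨hs.1.1, hs.1.2.trans (ht'a.trans_le haE.1.2).le⟩, hs.2⟩
        rw [hS, Finset.coe_insert, mem_insert_iff] at hst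
        exact hst.resolve_left (hs.1.2.trans_lt ht'a).ne
      · have hst : s ∈ Ioc 0 t ∩ E := hS ▸ Finset.mem_coe.2 (Finset.mem_insert_of_mem hs)
        exact ⟨⟨hst.1.1, Finset.le_max' _ _ (Finset.mem_insert_of_mem hs)⟩, hst.2⟩
    have hPa : P a := hstep t' a ht'0 ht'a.le (fun s hs hsE => (hs.1.not_ge (hle s
      ⟨⟨ht'0.trans_lt hs.1, hs.2.le.trans haE.1.2⟩, hsE⟩ hs.2.ne)).elim) hPt'
    exact hstep a t haE.1.1.le haE.1.2 (fun s hs hsE => (hs.1.not_ge ((hle s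
      ⟨⟨haE.1.1.trans hs.1, hs.2.le⟩, hsE⟩ hs.1.ne').trans ht'a.le)).elim) hPa

theorem Finset.sum_erase_ite_sub_sum_erase_ite {J R : Type*} [Fintype J] [DecidableEq J] [Ring R]
    (x y j : J) (c : R) :
    ∑ k ∈ Finset.univ.erase j, (if x = k ∧ y = j then c else 0)
      - ∑ k ∈ Finset.univ.erase j, (if x = j ∧ y = k then c else 0)
      = c * ((if y = j then 1 else 0) - (if x = j then 1 else 0)) := by
  by_cases hx : x = j <;> by_cases hy : y = j <;> simp [hx, hy, Finset.sum_ite_eq]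

section PiecewiseConstantPath

variable {J : Type*} {Z Zm : ℝ → J}

theorem eqOn_Ico_of_no_jump (hrc : ∀ s, 0 ≤ s → ∀ᶠ u in 𝓝[≥] s, Z u = Z s)
    (hll : ∀ s, 0 < s → ∀ᶠ u in 𝓝[<] s, Z u = Zm s) {a b : ℝ} (ha : 0 ≤ a)
    (hgap : ∀ s ∈ Ioo a b, Zm s = Z s) : EqOn Z (fun _ => Z a) (Ico a b) := by
  intro u hu
  refine (isPreconnected_Ico.induction₂' (fun x y => Z x = Z y) ?_ (fun _ _ _ _ _ _ => Eq.trans)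
    ⟨le_rfl, hu.1.trans_lt hu.2⟩ hu).symm
  intro x hx
  suffices hloc : ∀ᶠ y in 𝓝[Ico a b] x, Z y = Z x from hloc.mono fun y hy => ⟨hy.symm, hy⟩
  rcases hx.1.eq_or_lt with rfl | hax
  · exact nhdsWithin_mono _ Ico_subset_Ici_self (hrc _ ha)
  · refine nhdsWithin_le_nhds (?_ : ∀ᶠ y in 𝓝 x, Z y = Z x)
    rw [← nhdsLT_sup_nhdsGE, eventually_sup]
    exact ⟨(hll x (ha.trans_lt hax)).mono fun y hy => hy.trans (hgap x ⟨hax, hx.2⟩),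
      hrc x (ha.trans hax.le)⟩

theorem leftLim_eqOn_Ioc_of_no_jump (hrc : ∀ s, 0 ≤ s → ∀ᶠ u in 𝓝[≥] s, Z u = Z s)
    (hll : ∀ s, 0 < s → ∀ᶠ u in 𝓝[<] s, Z u = Zm s) {a b : ℝ} (ha : 0 ≤ a)
    (hgap : ∀ s ∈ Ioo a b, Zm s = Z s) : EqOn Zm (fun _ => Z a) (Ioc a b) := by
  intro s hs
  obtain ⟨u, hu, hus⟩ := ((hll s (ha.trans_lt hs.1)).and (Ioo_mem_nhdsLT hs.1)).exists
  rw [← hu]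
  exact eqOn_Ico_of_no_jump hrc hll ha hgap ⟨hus.1.le, hus.2.trans_le hs.2⟩

theorem integrableOn_Ioc_comp_of_finite_jumps
    (hrc : ∀ s, 0 ≤ s → ∀ᶠ u in 𝓝[≥] s, Z u = Z s)
    (hll : ∀ s, 0 < s → ∀ᶠ u in 𝓝[<] s, Z u = Zm s) (φ : J → ℝ) (μ : Measure ℝ)
    [IsLocallyFiniteMeasure μ] {t : ℝ} (ht : 0 ≤ t)
    (hfin : {s | s ∈ Ioc 0 t ∧ Zm s ≠ Z s}.Finite) :
    IntegrableOn (fun s => φ (Zm s)) (Ioc 0 t) μ := by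
  refine nonneg_induction_on_gaps (E := {s | Zm s ≠ Z s})
    (by rw [Ioc_self]; exact integrableOn_empty)
    (fun a b ha hab hgap hPa => ?_) ht hfin
  rw [← Ioc_union_Ioc_eq_Ioc ha hab]
  refine hPa.union ((integrableOn_const (C := φ (Z a)) measure_Ioc_lt_top.ne).congr_fun
    (fun s hs => ?_) measurableSet_Ioc)
  exact congrArg φ
    (leftLim_eqOn_Ioc_of_no_jump hrc hll ha (fun s hs => not_not.1 (hgap s hs)) hs).symm

theorem StieltjesFunction.comp_mul_eq_of_finite_jumps
    (hrc : ∀ s, 0 ≤ s → ∀ᶠ u in 𝓝[≥] s, Z u = Z s)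
    (hll : ∀ s, 0 < s → ∀ᶠ u in 𝓝[<] s, Z u = Zm s)
    (hfin : ∀ t : ℝ, {s | s ∈ Ioc 0 t ∧ Zm s ≠ Z s}.Finite)
    (H : StieltjesFunction ℝ) (φ : J → ℝ) {t : ℝ} (ht : 0 ≤ t) :
    φ (Z t) * H t = φ (Z 0) * H 0
      + ∑ᶠ s ∈ {s | s ∈ Ioc 0 t ∧ Zm s ≠ Z s}, H s * (φ (Z s) - φ (Zm s))
      + ∫ s in Ioc 0 t, φ (Zm s) ∂H.measure := by
  refine nonneg_induction_on_gaps (E := {s | Zm s ≠ Z s}) (by simp)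
    (fun a b ha hab hgap ih => ?_) ht (hfin t)
  rcases hab.eq_or_lt with rfl | hab
  · exact ih
  have hZm : EqOn Zm (fun _ => Z a) (Ioc a b) :=
    leftLim_eqOn_Ioc_of_no_jump hrc hll ha fun s hs => not_not.1 (hgap s hs)
  set g := fun s => H s * (φ (Z s) - φ (Zm s))
  have hjumps : {s | s ∈ Ioc 0 b ∧ Zm s ≠ Z s}
      = {s | s ∈ Ioc 0 a ∧ Zm s ≠ Z s} ∪ {s | s ∈ Ioc a b ∧ Zm s ≠ Z s} := by
    rw [← sep_union, ← Ioc_union_Ioc_eq_Ioc ha hab.le]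
    rfl
  have hlast : ∑ᶠ s ∈ {s | s ∈ Ioc a b ∧ Zm s ≠ Z s}, g s = H b * (φ (Z b) - φ (Z a)) := by
    rw [finsum_mem_inter_support_eq g _ {b}, finsum_mem_singleton]
    · simp only [g, show Zm b = Z a from hZm ⟨hab, le_rfl⟩]
    ext s
    simp only [mem_inter_iff, mem_ofPred_eq, mem_singleton_iff, Function.mem_support]
    constructor
    · rintro ⟨⟨hs, hjump⟩, hg⟩
      exact ⟨of_not_not fun hsb => hgap s ⟨hs.1, hs.2.lt_of_ne hsb⟩ hjump, hg⟩
    · rintro ⟨rfl, hg⟩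
      exact ⟨⟨⟨hab, le_rfl⟩, fun h => hg (by simp [g, h])⟩, hg⟩
  have hint : ∫ s in Ioc a b, φ (Zm s) ∂H.measure = (H b - H a) * φ (Z a) := by
    rw [setIntegral_congr_fun measurableSet_Ioc fun s hs => congrArg φ (hZm hs),
      setIntegral_const, measureReal_def, H.measure_Ioc,
      ENNReal.toReal_ofReal (sub_nonneg.2 (H.mono hab.le)), smul_eq_mul]
  have hintegrable : ∀ c, 0 ≤ c → IntegrableOn (fun s => φ (Zm s)) (Ioc 0 c) H.measure :=
    fun c hc => integrableOn_Ioc_comp_of_finite_jumps hrc hll φ H.measure hc (hfin c)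
  rw [hjumps, finsum_mem_union ((Ioc_disjoint_Ioc_of_le le_rfl).mono (sep_subset _ _)
      (sep_subset _ _)) (hfin a) ((hfin b).subset fun s hs => ⟨Ioc_subset_Ioc_left ha hs.1, hs.2⟩),
    ← Ioc_union_Ioc_eq_Ioc ha hab.le, setIntegral_union (Ioc_disjoint_Ioc_of_le le_rfl)
      measurableSet_Ioc (hintegrable a ha)
      ((hintegrable b (ha.trans hab.le)).mono_set (Ioc_subset_Ioc_left ha)), hlast, hint]
  linear_combination ih

theorem jumpInt_eq_sum_toFinset [DecidableEq J] (h : ℝ → ℝ) {t : ℝ}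
    (hfin : {s | s ∈ Ioc 0 t ∧ Zm s ≠ Z s}.Finite) {a b : J} (hab : a ≠ b) :
    jumpInt h Zm Z a b t = ∑ s ∈ hfin.toFinset, if Zm s = a ∧ Z s = b then h s else 0 := by
  rw [jumpInt, ← Finset.sum_filter, ← finsum_mem_coe_finset]
  refine finsum_mem_congr (Set.ext fun s => ?_) fun _ _ => rfl
  simp only [Finset.coe_filter, Finite.mem_toFinset, mem_ofPred_eq]
  exact ⟨fun ⟨hs, ha, hb⟩ => ⟨⟨hs, ha ▸ hb ▸ hab⟩, ha, hb⟩, fun ⟨⟨hs, _⟩, hab⟩ => ⟨hs, hab⟩⟩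

theorem sum_jumpInt_sub_sum_jumpInt [Fintype J] [DecidableEq J] (h : ℝ → ℝ) {t : ℝ}
    (hfin : {s | s ∈ Ioc 0 t ∧ Zm s ≠ Z s}.Finite) (j : J) :
    ∑ k ∈ Finset.univ.erase j, jumpInt h Zm Z k j t
      - ∑ k ∈ Finset.univ.erase j, jumpInt h Zm Z j k t
      = ∑ᶠ s ∈ {s | s ∈ Ioc 0 t ∧ Zm s ≠ Z s},
          h s * ((if Z s = j then 1 else 0) - (if Zm s = j then 1 else 0)) := by
  rw [finsum_mem_eq_finite_toFinset_sum _ hfin,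
    Finset.sum_congr rfl fun k hk => jumpInt_eq_sum_toFinset h hfin (Finset.ne_of_mem_erase hk),
    Finset.sum_congr rfl fun k hk =>
      jumpInt_eq_sum_toFinset h hfin (Finset.ne_of_mem_erase hk).symm,
    Finset.sum_comm, Finset.sum_comm (s := Finset.univ.erase j), ← Finset.sum_sub_distrib]
  exact Finset.sum_congr rfl fun s _ => Finset.sum_erase_ite_sub_sum_erase_ite _ _ j (h s)

end PiecewiseConstantPath

/-- For a weight function `H = H₁ − H₂` (difference of nondecreasing
right-continuous functions), for every `t ≥ 0` and `j ∈ J`,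
`H(t) 1{Z(t) = j} = 1{j = z₀} H(0) + ∑_{k ≠ j} ∫_{(0,t]} H(s) N_{kj}(ds)
  − ∑_{k ≠ j} ∫_{(0,t]} H(s) N_{jk}(ds) + ∫_{(0,t]} 1{Z(s−) = j} dH(s)`,
where `dH = dH₁ − dH₂` is the Lebesgue–Stieltjes signed measure of `H`. -/
theorem weighted_occupation_indicator_identity
    {J : Type*} [Fintype J] [DecidableEq J] (z0 : J) (Z Zm : ℝ → J)
    (hZ0 : Z 0 = z0)
    (hrc : ∀ s : ℝ, 0 ≤ s → ∃ ε > 0, ∀ u ∈ Set.Ico s (s + ε), Z u = Z s)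
    (hll : ∀ s : ℝ, 0 < s → ∃ ε > 0, ∀ u ∈ Set.Ioo (s - ε) s, Z u = Zm s)
    (hfin : ∀ t : ℝ, {s : ℝ | s ∈ Set.Ioc 0 t ∧ Zm s ≠ Z s}.Finite)
    (H1 H2 : StieltjesFunction ℝ)
    (t : ℝ) (ht : 0 ≤ t) (j : J) :
    (H1 t - H2 t) * (if Z t = j then (1 : ℝ) else 0)
      = (if j = z0 then (1 : ℝ) else 0) * (H1 0 - H2 0)
        + ∑ k ∈ Finset.univ.erase j,
            jumpInt (fun s => H1 s - H2 s) Zm Z k j t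
        - ∑ k ∈ Finset.univ.erase j,
            jumpInt (fun s => H1 s - H2 s) Zm Z j k t
        + ((∫ s in Set.Ioc (0:ℝ) t, (if Zm s = j then (1:ℝ) else 0) ∂H1.measure)
            - ∫ s in Set.Ioc (0:ℝ) t, (if Zm s = j then (1:ℝ) else 0) ∂H2.measure) := by
  have hrc' : ∀ s, 0 ≤ s → ∀ᶠ u in 𝓝[≥] s, Z u = Z s := fun s hs => by
    obtain ⟨ε, hε, hZ⟩ := hrc s hs
    exact eventually_of_mem (Ico_mem_nhdsGE (lt_add_of_pos_right s hε)) hZ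
  have hll' : ∀ s, 0 < s → ∀ᶠ u in 𝓝[<] s, Z u = Zm s := fun s hs => by
    obtain ⟨ε, hε, hZ⟩ := hll s hs
    exact eventually_of_mem (Ioo_mem_nhdsLT (sub_lt_self s hε)) hZ
  have h1 := H1.comp_mul_eq_of_finite_jumps hrc' hll' hfin (fun z => if z = j then 1 else 0) ht
  have h2 := H2.comp_mul_eq_of_finite_jumps hrc' hll' hfin (fun z => if z = j then 1 else 0) ht
  have hjumps := sum_jumpInt_sub_sum_jumpInt (fun s => H1 s - H2 s) (hfin t) j
  simp only [sub_mul] at hjumps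
  rw [finsum_mem_sub_distrib _ _ (hfin t)] at hjumps
  simp only [hZ0, @eq_comm _ z0 j] at h1 h2
  linear_combination h1 - h2 - hjumps
end

section
/- For every t > 0 and every j ∈ J, the left limit p^ρ_j(t−) = lim_{s↑t} p^ρ_j(s) exists and E[H(t) 1{Z_{t−} = j}] = p^ρ_j(t−) − E[(1 − ρ(τ, Z_{τ−}, Z_τ)) 1{τ = t} 1{Z_{t−} = j}]. -/
open Set Filter MeasureTheory Topology

/-- Number of jumps of type `j → k` in `(0, t]` of the path `Z`, whose left-limit path is `Zm`. -/
noncomputable def jumpCount {J : Type*} (Zm Z : ℝ → J) (j k : J) (t : ℝ) : ℕ :=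
  Nat.card {s : ℝ // s ∈ Set.Ioc 0 t ∧ Zm s = j ∧ Z s = k}

/-- For every `t > 0` and `j ∈ J`, the left limit `p^ρ_j(t−)` exists and
`E[H(t) 1{Z_{t−} = j}] = p^ρ_j(t−) − E[(1 − ρ(τ, Z_{τ−}, Z_τ)) 1{τ = t} 1{Z_{t−} = j}]`. -/
theorem scaled_occupation_left_limit
    {Ω J : Type*} [MeasurableSpace Ω] [MeasurableSpace J] [MeasurableSingletonClass J]
    [Fintype J] [DecidableEq J]
    (P : Measure Ω) [IsProbabilityMeasure P]
    (z0 : J) (J0 : Finset J) (hz0 : z0 ∈ J0)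
    (Z Zm : ℝ → Ω → J)
    (hZ0 : ∀ ω, Z 0 ω = z0)
    (hjm : Measurable fun p : ℝ × Ω => Z p.1 p.2)
    (hrc : ∀ ω, ∀ s : ℝ, 0 ≤ s → ∃ ε > 0, ∀ u ∈ Set.Ico s (s + ε), Z u ω = Z s ω)
    (hll : ∀ ω, ∀ s : ℝ, 0 < s → ∃ ε > 0, ∀ u ∈ Set.Ioo (s - ε) s, Z u ω = Zm s ω)
    (hfin : ∀ ω, ∀ t : ℝ, {s : ℝ | s ∈ Set.Ioc 0 t ∧ Zm s ω ≠ Z s ω}.Finite)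
    (hNint : ∀ j k : J, j ≠ k → ∀ t : ℝ, 0 ≤ t →
      Integrable (fun ω => (jumpCount (fun s => Zm s ω) (fun s => Z s ω) j k t : ℝ)) P)
    (habs : ∀ ω, ∀ s u : ℝ, 0 ≤ s → s ≤ u → Z s ω ∉ J0 → Z u ω ∉ J0)
    (ρ : ℝ → J → J → ℝ)
    (hρm : Measurable fun q : ℝ × J × J => ρ q.1 q.2.1 q.2.2)
    (hρnn : ∀ t j k, 0 ≤ ρ t j k)
    (hρb : ∀ T : ℝ, ∃ M, ∀ t ∈ Set.Icc (0:ℝ) T, ∀ j k, ρ t j k ≤ M)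
    (t : ℝ) (ht : 0 < t) (j : J) :
    ∃ L : ℝ,
      Tendsto
        (fun s => ∫ ω, scaleH J0 ρ (fun u => Zm u ω) (fun u => Z u ω) s *
          (if Z s ω = j then (1:ℝ) else 0) ∂P) (𝓝[<] t) (𝓝 L) ∧
      (∫ ω, scaleH J0 ρ (fun u => Zm u ω) (fun u => Z u ω) t *
          (if Zm t ω = j then (1:ℝ) else 0) ∂P)
        = L - ∫ ω,
            (1 - ρ (hitTime J0 fun u => Z u ω)
                (Zm (hitTime J0 fun u => Z u ω) ω)
                (Z (hitTime J0 fun u => Z u ω) ω)) *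
            (if hitTime J0 (fun u => Z u ω) = t then (1:ℝ) else 0) *
            (if Zm t ω = j then (1:ℝ) else 0) ∂P := by
  classical
  -- notation
  set τ : Ω → ℝ := fun ω => hitTime J0 (fun u => Z u ω) with hτdef
  set S : Ω → Set ℝ := fun ω => {s : ℝ | 0 < s ∧ Z s ω ∉ J0} with hSdef
  have hτS : ∀ ω, τ ω = sInf (S ω) := fun ω => rfl
  have hSbdd : ∀ ω, BddBelow (S ω) := fun ω => ⟨0, fun s hs => hs.1.le⟩
  have hτnn : ∀ ω, 0 ≤ τ ω := fun ω => Real.sInf_nonneg (fun s hs => hs.1.le)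
  -- sections are measurable
  have hsec : ∀ s : ℝ, Measurable (fun ω => Z s ω) := fun s =>
    hjm.comp (measurable_const.prodMk measurable_id)
  -- rational points in S close above any point of S
  have hQmem : ∀ ω, ∀ s ∈ S ω, ∀ δ : ℝ, 0 < δ →
      ∃ q : ℚ, (q : ℝ) ∈ S ω ∧ s ≤ (q : ℝ) ∧ (q : ℝ) < s + δ := by
    intro ω s hs δ hδ
    obtain ⟨ε, hε, hεc⟩ := hrc ω s hs.1.le
    obtain ⟨q, hq1, hq2⟩ := exists_rat_btwn (show s < s + min ε δ by
      simp [lt_min_iff, hε, hδ])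
    refine ⟨q, ⟨hs.1.trans hq1, ?_⟩, hq1.le, hq2.trans_le (by simp [min_le_right, add_le_add_iff_left, min_le_right ε δ])⟩
    rw [hεc q ⟨hq1.le, hq2.trans_le (by simp [add_le_add_iff_left, min_le_left ε δ])⟩]
    exact hs.2
  -- S empty iff no rational in S
  have hSempty_iff : ∀ ω, S ω = ∅ ↔ ∀ q : ℚ, (q : ℝ) ∉ S ω := by
    intro ω
    constructor
    · intro h q hq; rw [h] at hq; exact hq
    · intro h
      by_contra hne
      obtain ⟨s, hs⟩ := Set.nonempty_iff_ne_empty.2 hne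
      obtain ⟨q, hq, _, _⟩ := hQmem ω s hs 1 one_pos
      exact h q hq
  have hτempty : ∀ ω, S ω = ∅ → τ ω = 0 := by
    intro ω h; rw [hτS, h]; exact Real.sInf_empty
  -- facts when Z t ∉ J0
  have hfactA : ∀ ω, ∀ s : ℝ, 0 < s → Z s ω ∉ J0 →
      0 < τ ω ∧ τ ω ≤ s ∧ Z (τ ω) ω ∉ J0 := by
    intro ω s hs hZs
    have hne : (S ω).Nonempty := ⟨s, hs, hZs⟩
    have hle : τ ω ≤ s := csInf_le (hSbdd ω) ⟨hs, hZs⟩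
    obtain ⟨ε, hε, hεc⟩ := hrc ω 0 le_rfl
    have hpos : ε ≤ τ ω := by
      refine le_csInf hne fun u hu => ?_
      by_contra hlt
      push_neg at hlt
      have h0 : Z u ω = Z 0 ω := hεc u ⟨hu.1.le, by simpa using hlt⟩
      refine hu.2 ?_
      show Z u ω ∈ J0
      rw [h0, hZ0 ω]
      exact hz0
    obtain ⟨ε', hε', hεc'⟩ := hrc ω (τ ω) (hτnn ω)
    obtain ⟨u, hu, hult⟩ := (csInf_lt_iff (hSbdd ω) hne).1
      (show sInf (S ω) < τ ω + ε' by rw [← hτS]; linarith)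
    have huge : τ ω ≤ u := csInf_le (hSbdd ω) hu
    have : Z (τ ω) ω = Z u ω := (hεc' u ⟨huge, hult⟩).symm
    exact ⟨lt_of_lt_of_le hε hpos, hle, this ▸ hu.2⟩
  -- if Z t ∈ J0 then τ ≠ t
  have hb1 : ∀ ω, Z t ω ∈ J0 → τ ω ≠ t := by
    intro ω hZt
    by_cases hS : S ω = ∅
    · rw [hτempty ω hS]; exact ht.ne
    · have hne : (S ω).Nonempty := Set.nonempty_iff_ne_empty.2 hS
      obtain ⟨ε, hε, hεc⟩ := hrc ω t ht.le
      have : t + ε ≤ τ ω := by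
        refine le_csInf hne fun u hu => ?_
        by_contra hlt
        push_neg at hlt
        have htu : t < u := by
          by_contra hle
          push_neg at hle
          exact (habs ω u t hu.1.le hle hu.2) hZt
        have heq : Z u ω = Z t ω := hεc u ⟨htu.le, hlt⟩
        refine hu.2 ?_
        show Z u ω ∈ J0
        rw [heq]
        exact hZt
      intro h; rw [h] at this; linarith
  -- if Z t ∉ J0 and Zm t ∈ J0 then τ = t
  have hb2 : ∀ ω, Z t ω ∉ J0 → Zm t ω ∈ J0 → τ ω = t := by
    intro ω hZt hZm
    have h1 := hfactA ω t ht hZt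
    refine le_antisymm h1.2.1 (le_csInf ⟨t, ht, hZt⟩ fun u hu => ?_)
    by_contra hlt
    push_neg at hlt
    obtain ⟨ε, hε, hεc⟩ := hll ω t ht
    obtain ⟨v, hv1, hv2⟩ := exists_between (show max u (t - ε) < t by
      exact max_lt hlt (by linarith))
    have hZv : Z v ω = Zm t ω := hεc v ⟨lt_of_le_of_lt (le_max_right _ _) hv1, hv2⟩
    exact (habs ω u v hu.1.le (le_of_lt (lt_of_le_of_lt (le_max_left _ _) hv1)) hu.2)
      (hZv ▸ hZm)
  -- if Zm t ∉ J0 then τ < t and Z t ∉ J0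
  have hb3 : ∀ ω, Zm t ω ∉ J0 → τ ω < t ∧ Z t ω ∉ J0 := by
    intro ω hZm
    obtain ⟨ε, hε, hεc⟩ := hll ω t ht
    obtain ⟨s, hs1, hs2⟩ := exists_between (show max (t - ε) 0 < t by
      exact max_lt (by linarith) ht)
    have hs0 : 0 < s := lt_of_le_of_lt (le_max_right _ _) hs1
    have hZs : Z s ω ∉ J0 := by
      rw [hεc s ⟨lt_of_le_of_lt (le_max_left _ _) hs1, hs2⟩]; exact hZm
    have := hfactA ω s hs0 hZs
    exact ⟨lt_of_le_of_lt this.2.1 hs2, habs ω s t hs0.le hs2.le hZs⟩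
  -- contrapositive: Z t ∈ J0 → Zm t ∈ J0
  have hb4 : ∀ ω, Z t ω ∈ J0 → Zm t ω ∈ J0 := by
    intro ω hZt
    by_contra h
    exact (hb3 ω h).2 hZt
  -- left window
  have hwin : ∀ ω, ∃ ε > 0, ∀ s : ℝ, t - ε < s → s < t → 0 < s ∧ Z s ω = Zm t ω := by
    intro ω
    obtain ⟨ε, hε, hεc⟩ := hll ω t ht
    refine ⟨min ε t, lt_min hε ht, fun s hs1 hs2 => ?_⟩
    have h1 : t - ε < s := by
      have := min_le_left ε t
      linarith
    have h2 : 0 < s := by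
      have := min_le_right ε t
      linarith
    exact ⟨h2, hεc s ⟨h1, hs2⟩⟩
  -- measurability of τ
  have hmτ : Measurable τ := by
    apply measurable_of_Iio
    intro c
    by_cases hc : c ≤ 0
    · convert MeasurableSet.empty
      ext ω
      simp only [Set.mem_preimage, Set.mem_Iio, Set.mem_empty_iff_false, iff_false, not_lt]
      exact hc.trans (hτnn ω)
    · push_neg at hc
      have hkey : τ ⁻¹' Set.Iio c =
          (⋂ (q : ℚ) (_ : 0 < (q : ℝ)), {ω | Z (q : ℝ) ω ∈ J0}) ∪
          ⋃ (q : ℚ) (_ : 0 < (q : ℝ) ∧ (q : ℝ) < c), {ω | Z (q : ℝ) ω ∉ J0} := by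
        ext ω
        simp only [Set.mem_preimage, Set.mem_Iio, Set.mem_union, Set.mem_iInter, Set.mem_iUnion,
          Set.mem_setOf_eq]
        constructor
        · intro hτc
          by_cases hS : S ω = ∅
          · left
            intro q hq
            by_contra hq2
            exact ((hSempty_iff ω).1 hS q) ⟨hq, hq2⟩
          · right
            have hne : (S ω).Nonempty := Set.nonempty_iff_ne_empty.2 hS
            obtain ⟨u, hu, huc⟩ := (csInf_lt_iff (hSbdd ω) hne).1 (by rw [← hτS]; exact hτc)
            obtain ⟨q, hq, hq1, hq2⟩ := hQmem ω u hu (c - u) (by linarith)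
            exact ⟨q, ⟨hq.1, by linarith⟩, hq.2⟩
        · rintro (h | ⟨q, ⟨hq1, hq2⟩, hq3⟩)
          · have : S ω = ∅ := (hSempty_iff ω).2 fun q hq => hq.2 (h q hq.1)
            rw [hτempty ω this]; exact hc
          · exact lt_of_le_of_lt (csInf_le (hSbdd ω) ⟨hq1, hq3⟩) hq2
      rw [hkey]
      refine MeasurableSet.union ?_ ?_
      · exact MeasurableSet.iInter fun q => MeasurableSet.iInter fun _ =>
          (hsec q) (Finset.measurableSet J0)
      · exact MeasurableSet.iUnion fun q => MeasurableSet.iUnion fun _ =>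
          ((hsec q) (Finset.measurableSet J0)).compl
  -- measurability of Zm t
  have hmZm : Measurable (fun ω => Zm t ω) := by
    apply measurable_to_countable'
    intro a
    have hkey : (fun ω => Zm t ω) ⁻¹' {a} =
        ⋃ (q : ℚ) (_ : (q : ℝ) < t), ⋂ (r : ℚ) (_ : (q : ℝ) < (r : ℝ) ∧ (r : ℝ) < t),
          {ω | Z (r : ℝ) ω = a} := by
      ext ω
      simp only [Set.mem_preimage, Set.mem_singleton_iff, Set.mem_iUnion, Set.mem_iInter,
        Set.mem_setOf_eq]
      constructor
      · intro h
        obtain ⟨ε, hε, hεc⟩ := hll ω t ht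
        obtain ⟨q, hq1, hq2⟩ := exists_rat_btwn (show t - ε < t by linarith)
        refine ⟨q, hq2, fun r ⟨hr1, hr2⟩ => ?_⟩
        rw [hεc r ⟨by linarith, hr2⟩]; exact h
      · rintro ⟨q, hq, hr⟩
        obtain ⟨ε, hε, hεc⟩ := hll ω t ht
        obtain ⟨r, hr1, hr2⟩ := exists_rat_btwn (show max (q : ℝ) (t - ε) < t by
          exact max_lt hq (by linarith))
        have h1 : Z (r : ℝ) ω = Zm t ω :=
          hεc r ⟨lt_of_le_of_lt (le_max_right _ _) hr1, hr2⟩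
        have h2 : Z (r : ℝ) ω = a :=
          hr r ⟨lt_of_le_of_lt (le_max_left _ _) hr1, hr2⟩
        rw [← h1, h2]
    rw [hkey]
    exact MeasurableSet.iUnion fun q => MeasurableSet.iUnion fun _ =>
      MeasurableSet.iInter fun r => MeasurableSet.iInter fun _ =>
        (hsec r) (measurableSet_singleton a)
  -- surrogate values at the hitting time
  set A : Ω → J := fun ω => if Z t ω ∈ J0 then z0 else Zm (τ ω) ω with hAdef
  set B : Ω → J := fun ω => if Z t ω ∈ J0 then z0 else Z (τ ω) ω with hBdef
  have hmA : Measurable A := by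
    apply measurable_to_countable'
    intro a
    have hkey : A ⁻¹' {a} =
        ({ω | Z t ω ∈ J0} ∩ {ω | z0 = a}) ∪
        ({ω | Z t ω ∉ J0} ∩ ⋂ (n : ℕ), ⋃ (q : ℚ),
          {ω | τ ω - 1 / (n + 1) < (q : ℝ) ∧ (q : ℝ) < τ ω ∧ Z (q : ℝ) ω = a}) := by
      ext ω
      simp only [hAdef, Set.mem_preimage, Set.mem_singleton_iff, Set.mem_union, Set.mem_inter_iff,
        Set.mem_setOf_eq, Set.mem_iInter, Set.mem_iUnion]
      by_cases hZt : Z t ω ∈ J0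
      · simp only [hZt, if_pos, not_true_eq_false, false_and, or_false, true_and]
      · simp only [hZt, if_neg, not_false_eq_true, true_and, false_and, false_or]
        have hA := hfactA ω t ht hZt
        obtain ⟨ε, hε, hεc⟩ := hll ω (τ ω) hA.1
        constructor
        · intro h n
          obtain ⟨q, hq1, hq2⟩ := exists_rat_btwn
            (show max (τ ω - ε) (τ ω - 1 / (n + 1)) < τ ω by
              refine max_lt (by linarith) (by
                have : (0:ℝ) < 1 / (n + 1) := by positivity
                linarith))
          refine ⟨q, lt_of_le_of_lt (le_max_right _ _) hq1, hq2, ?_⟩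
          rw [hεc q ⟨lt_of_le_of_lt (le_max_left _ _) hq1, hq2⟩]
          exact h
        · intro h
          obtain ⟨n, hn⟩ := exists_nat_one_div_lt hε
          obtain ⟨q, hq1, hq2, hq3⟩ := h n
          rw [← hq3, hεc q ⟨by linarith, hq2⟩]
    rw [hkey]
    have hZtm : MeasurableSet {ω | Z t ω ∈ J0} := (hsec t) (Finset.measurableSet J0)
    have hz0a : MeasurableSet {ω : Ω | z0 = a} := by
      by_cases h : z0 = a <;> simp [h]
    refine (hZtm.inter hz0a).union (hZtm.compl.inter ?_)
    refine MeasurableSet.iInter fun n => MeasurableSet.iUnion fun q => ?_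
    have h1 : MeasurableSet {ω | τ ω - 1 / (n + 1 : ℝ) < (q : ℝ)} := by
      have : Measurable fun ω => τ ω - 1 / (n + 1 : ℝ) := hmτ.sub measurable_const
      exact measurableSet_lt this measurable_const
    have h2 : MeasurableSet {ω | (q : ℝ) < τ ω} := measurableSet_lt measurable_const hmτ
    have h3 : MeasurableSet {ω | Z (q : ℝ) ω = a} := (hsec q) (measurableSet_singleton a)
    have heq : {ω | τ ω - 1 / (n + 1 : ℝ) < (q : ℝ) ∧ (q : ℝ) < τ ω ∧ Z (q : ℝ) ω = a} =
        {ω | τ ω - 1 / (n + 1 : ℝ) < (q : ℝ)} ∩ ({ω | (q : ℝ) < τ ω} ∩ {ω | Z (q : ℝ) ω = a}) := by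
      ext ω; simp [and_assoc]
    rw [heq]
    exact h1.inter (h2.inter h3)
  have hmB : Measurable B := by
    apply measurable_to_countable'
    intro b
    have hkey : B ⁻¹' {b} =
        ({ω | Z t ω ∈ J0} ∩ {ω | z0 = b}) ∪
        ({ω | Z t ω ∉ J0} ∩ ⋂ (n : ℕ), ⋃ (q : ℚ),
          {ω | τ ω ≤ (q : ℝ) ∧ (q : ℝ) < τ ω + 1 / (n + 1) ∧ Z (q : ℝ) ω = b}) := by
      ext ω
      simp only [hBdef, Set.mem_preimage, Set.mem_singleton_iff, Set.mem_union, Set.mem_inter_iff,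
        Set.mem_setOf_eq, Set.mem_iInter, Set.mem_iUnion]
      by_cases hZt : Z t ω ∈ J0
      · simp only [hZt, if_pos, not_true_eq_false, false_and, or_false, true_and]
      · simp only [hZt, if_neg, not_false_eq_true, true_and, false_and, false_or]
        obtain ⟨ε, hε, hεc⟩ := hrc ω (τ ω) (hτnn ω)
        constructor
        · intro h n
          have hpos : (0:ℝ) < min ε (1 / (n + 1)) := lt_min hε (by positivity)
          obtain ⟨q, hq1, hq2⟩ := exists_rat_btwn
            (show τ ω < τ ω + min ε (1 / (n + 1)) by linarith)
          refine ⟨q, hq1.le, lt_of_lt_of_le hq2 (by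
            simp [add_le_add_iff_left, min_le_right ε (1 / (n + 1 : ℝ))]), ?_⟩
          rw [hεc q ⟨hq1.le, lt_of_lt_of_le hq2 (by
            simp [add_le_add_iff_left, min_le_left ε (1 / (n + 1 : ℝ))])⟩]
          exact h
        · intro h
          obtain ⟨n, hn⟩ := exists_nat_one_div_lt hε
          obtain ⟨q, hq1, hq2, hq3⟩ := h n
          rw [← hq3, hεc q ⟨hq1, by linarith⟩]
    rw [hkey]
    have hZtm : MeasurableSet {ω | Z t ω ∈ J0} := (hsec t) (Finset.measurableSet J0)
    have hz0b : MeasurableSet {ω : Ω | z0 = b} := by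
      by_cases h : z0 = b <;> simp [h]
    refine (hZtm.inter hz0b).union (hZtm.compl.inter ?_)
    refine MeasurableSet.iInter fun n => MeasurableSet.iUnion fun q => ?_
    have h1 : MeasurableSet {ω | τ ω ≤ (q : ℝ)} := measurableSet_le hmτ measurable_const
    have h2 : MeasurableSet {ω | (q : ℝ) < τ ω + 1 / (n + 1 : ℝ)} :=
      measurableSet_lt measurable_const (hmτ.add_const _)
    have h3 : MeasurableSet {ω | Z (q : ℝ) ω = b} := (hsec q) (measurableSet_singleton b)
    have : {ω | τ ω ≤ (q : ℝ) ∧ (q : ℝ) < τ ω + 1 / (n + 1 : ℝ) ∧ Z (q : ℝ) ω = b} =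
        {ω | τ ω ≤ (q : ℝ)} ∩ ({ω | (q : ℝ) < τ ω + 1 / (n + 1 : ℝ)} ∩ {ω | Z (q : ℝ) ω = b}) := by
      ext ω; simp [and_assoc]
    rw [this]
    exact h1.inter (h2.inter h3)
  -- the measurable value of ρ at the hitting time
  set R : Ω → ℝ := fun ω => ρ (τ ω) (A ω) (B ω) with hRdef
  have hmR : Measurable R :=
    hρm.comp (hmτ.prodMk (hmA.prodMk hmB))
  -- when Z t ∉ J0, R agrees with the statement's quantity
  have hReq : ∀ ω, Z t ω ∉ J0 → R ω = ρ (τ ω) (Zm (τ ω) ω) (Z (τ ω) ω) := by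
    intro ω h
    simp only [hRdef, hAdef, hBdef, if_neg h]
  -- measurable version of the integrand at time s ∈ (0, t]
  set G : ℝ → Ω → ℝ := fun s ω =>
    (if Z s ω ∈ J0 then 1 else R ω) * (if Z s ω = j then 1 else 0) with hGdef
  have hmG : ∀ s, Measurable (G s) := by
    intro s
    refine Measurable.mul (Measurable.ite ((hsec s) (Finset.measurableSet J0))
      measurable_const hmR) (Measurable.ite ((hsec s) (measurableSet_singleton j))
      measurable_const measurable_const)
  have hGeq : ∀ s : ℝ, 0 < s → s ≤ t → ∀ ω,
      scaleH J0 ρ (fun u => Zm u ω) (fun u => Z u ω) s *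
        (if Z s ω = j then (1:ℝ) else 0) = G s ω := by
    intro s hs hst ω
    simp only [scaleH, hGdef]
    by_cases h : Z s ω ∈ J0
    · simp [h]
    · have hZt : Z t ω ∉ J0 := habs ω s t hs.le hst h
      simp only [h, if_neg, not_false_eq_true]
      rw [hReq ω hZt]
  -- bound
  obtain ⟨M, hM⟩ := hρb t
  have hM0 : 0 ≤ M := le_trans (hρnn t j j) (hM t ⟨ht.le, le_rfl⟩ j j)
  set C : ℝ := max 1 M with hCdef
  have hC0 : 0 ≤ C := le_trans zero_le_one (le_max_left _ _)
  have hGbd : ∀ s : ℝ, 0 < s → s ≤ t → ∀ ω, ‖G s ω‖ ≤ C := by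
    intro s hs hst ω
    simp only [hGdef]
    by_cases h : Z s ω ∈ J0
    · rw [if_pos h]
      by_cases hj : Z s ω = j
      · rw [if_pos hj, one_mul, norm_one, hCdef]; exact le_max_left _ _
      · rw [if_neg hj, mul_zero, norm_zero]; exact hC0
    · rw [if_neg h]
      have hτs := hfactA ω s hs h
      have hRb : R ω ≤ M := hM (τ ω) ⟨hτnn ω, hτs.2.1.trans hst⟩ (A ω) (B ω)
      have hRnn : 0 ≤ R ω := hρnn _ _ _
      by_cases hj : Z s ω = j
      · rw [if_pos hj, mul_one, Real.norm_eq_abs, abs_of_nonneg hRnn]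
        exact hRb.trans (le_max_right _ _)
      · rw [if_neg hj, mul_zero, norm_zero]; exact hC0
  -- the limit function
  set g : Ω → ℝ := fun ω =>
    (if Zm t ω ∈ J0 then 1 else R ω) * (if Zm t ω = j then 1 else 0) with hgdef
  have hmg : Measurable g :=
    Measurable.mul (Measurable.ite (hmZm (Finset.measurableSet J0)) measurable_const hmR)
      (Measurable.ite (hmZm (measurableSet_singleton j)) measurable_const measurable_const)
  have hgbd : ∀ ω, ‖g ω‖ ≤ C := by
    intro ω
    simp only [hgdef]
    by_cases h : Zm t ω ∈ J0
    · rw [if_pos h]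
      by_cases hj : Zm t ω = j
      · rw [if_pos hj, one_mul, norm_one, hCdef]; exact le_max_left _ _
      · rw [if_neg hj, mul_zero, norm_zero]; exact hC0
    · rw [if_neg h]
      have hb := hb3 ω h
      have hRb : R ω ≤ M := hM (τ ω) ⟨hτnn ω, hb.1.le⟩ (A ω) (B ω)
      have hRnn : 0 ≤ R ω := hρnn _ _ _
      by_cases hj : Zm t ω = j
      · rw [if_pos hj, mul_one, Real.norm_eq_abs, abs_of_nonneg hRnn]
        exact hRb.trans (le_max_right _ _)
      · rw [if_neg hj, mul_zero, norm_zero]; exact hC0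
  have hgint : Integrable g P :=
    (integrable_const C).mono' hmg.aestronglyMeasurable (Filter.Eventually.of_forall hgbd)
  -- convergence of the integrals
  have hIoo : Set.Ioo 0 t ∈ 𝓝[<] t := Ioo_mem_nhdsLT_of_mem ⟨ht, le_rfl⟩
  have htend : Tendsto (fun s => ∫ ω, G s ω ∂P) (𝓝[<] t) (𝓝 (∫ ω, g ω ∂P)) := by
    refine tendsto_integral_filter_of_dominated_convergence (fun _ => C)
      (Filter.Eventually.of_forall fun s => (hmG s).aestronglyMeasurable)
      ?_ (integrable_const C) ?_
    · filter_upwards [hIoo] with s hs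
      exact Filter.Eventually.of_forall fun ω => hGbd s hs.1 hs.2.le ω
    · refine Filter.Eventually.of_forall fun ω => ?_
      obtain ⟨ε, hε, hεc⟩ := hwin ω
      refine Tendsto.congr' ?_ (tendsto_const_nhds (x := g ω))
      filter_upwards [Ioo_mem_nhdsLT_of_mem (show t ∈ Set.Ioc (t - ε) t from ⟨by linarith, le_rfl⟩)]
        with s hs
      obtain ⟨hs0, hZs⟩ := hεc s hs.1 hs.2
      simp only [hGdef, hgdef, hZs]
  have htend' : Tendsto
      (fun s => ∫ ω, scaleH J0 ρ (fun u => Zm u ω) (fun u => Z u ω) s *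
        (if Z s ω = j then (1:ℝ) else 0) ∂P) (𝓝[<] t) (𝓝 (∫ ω, g ω ∂P)) := by
    refine htend.congr' ?_
    filter_upwards [hIoo] with s hs
    exact integral_congr_ae (Filter.Eventually.of_forall fun ω => (hGeq s hs.1 hs.2.le ω).symm)
  refine ⟨∫ ω, g ω ∂P, htend', ?_⟩
  -- the correction term, in measurable form
  set h : Ω → ℝ := fun ω =>
    (1 - ρ t j (Z t ω)) * (if τ ω = t then 1 else 0) * (if Zm t ω = j then 1 else 0) with hhdef
  have hmh : Measurable h := by
    refine Measurable.mul (Measurable.mul ?_ ?_) ?_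
    · exact measurable_const.sub
        (hρm.comp (measurable_const.prodMk (measurable_const.prodMk (hsec t))))
    · exact Measurable.ite (hmτ (measurableSet_singleton t)) measurable_const measurable_const
    · exact Measurable.ite (hmZm (measurableSet_singleton j)) measurable_const measurable_const
  have hhbd : ∀ ω, ‖h ω‖ ≤ 1 + M := by
    intro ω
    simp only [hhdef]
    by_cases h1 : τ ω = t
    · by_cases h2 : Zm t ω = j
      · simp only [h1, h2, if_pos, mul_one]
        rw [Real.norm_eq_abs, abs_sub_comm, abs_sub_le_iff]
        have h3 := hρnn t j (Z t ω)
        have h4 := hM t ⟨ht.le, le_rfl⟩ j (Z t ω)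
        constructor <;> linarith
      · simp only [h2, if_neg, not_false_eq_true, mul_zero, norm_zero]
        linarith
    · simp only [h1, if_neg, not_false_eq_true, mul_zero, zero_mul, norm_zero]
      linarith
  have hhint : Integrable h P :=
    (integrable_const (1 + M)).mono' hmh.aestronglyMeasurable (Filter.Eventually.of_forall hhbd)
  -- h agrees with the statement's correction integrand
  have hheq : ∀ ω,
      (1 - ρ (hitTime J0 fun u => Z u ω) (Zm (hitTime J0 fun u => Z u ω) ω)
          (Z (hitTime J0 fun u => Z u ω) ω)) *
        (if hitTime J0 (fun u => Z u ω) = t then (1:ℝ) else 0) *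
        (if Zm t ω = j then (1:ℝ) else 0) = h ω := by
    intro ω
    have hτω : hitTime J0 (fun u => Z u ω) = τ ω := rfl
    simp only [hhdef, hτω]
    by_cases h1 : τ ω = t
    · by_cases h2 : Zm t ω = j
      · simp [h1, h2]
      · simp [h2]
    · simp [h1]
  -- pointwise identity at time t
  have hpt : ∀ ω, scaleH J0 ρ (fun u => Zm u ω) (fun u => Z u ω) t *
      (if Zm t ω = j then (1:ℝ) else 0) = g ω - h ω := by
    intro ω
    have hτω : hitTime J0 (fun u => Z u ω) = τ ω := rfl
    by_cases hj' : Zm t ω = j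
    · rw [if_pos hj', mul_one]
      simp only [hgdef, hhdef, if_pos hj', mul_one]
      by_cases h1 : Z t ω ∈ J0
      · have hZm : Zm t ω ∈ J0 := hb4 ω h1
        have hτne : τ ω ≠ t := hb1 ω h1
        have hsH : scaleH J0 ρ (fun u => Zm u ω) (fun u => Z u ω) t = 1 := by
          simp only [scaleH]; rw [if_pos h1]
        rw [hsH, if_pos hZm, if_neg hτne]
        ring
      · have hsH : scaleH J0 ρ (fun u => Zm u ω) (fun u => Z u ω) t
            = ρ (τ ω) (Zm (τ ω) ω) (Z (τ ω) ω) := by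
          simp only [scaleH]; rw [if_neg h1, hτω]
        by_cases h2 : Zm t ω ∈ J0
        · have hτt : τ ω = t := hb2 ω h1 h2
          rw [hsH, if_pos h2, if_pos hτt, hτt, hj']
          ring
        · have hτne : τ ω ≠ t := ne_of_lt (hb3 ω h2).1
          rw [hsH, if_neg h2, if_neg hτne, hReq ω h1]
          ring
    · rw [if_neg hj', mul_zero]
      simp only [hgdef, hhdef, if_neg hj', mul_zero]
      ring
  -- conclude
  calc (∫ ω, scaleH J0 ρ (fun u => Zm u ω) (fun u => Z u ω) t *
          (if Zm t ω = j then (1:ℝ) else 0) ∂P)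
      = ∫ ω, g ω - h ω ∂P := integral_congr_ae (Filter.Eventually.of_forall hpt)
    _ = (∫ ω, g ω ∂P) - ∫ ω, h ω ∂P := integral_sub hgint hhint
    _ = (∫ ω, g ω ∂P) - ∫ ω,
            (1 - ρ (hitTime J0 fun u => Z u ω)
                (Zm (hitTime J0 fun u => Z u ω) ω)
                (Z (hitTime J0 fun u => Z u ω) ω)) *
            (if hitTime J0 (fun u => Z u ω) = t then (1:ℝ) else 0) *
            (if Zm t ω = j then (1:ℝ) else 0) ∂P := by
        rw [integral_congr_ae (Filter.Eventually.of_forall hheq)]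
end

section
/- (Forward integral equations, Proposition 3.1, second part in expectation form.) For every t ≥ 0: (i) for every j ∈ J₀, p_j(t) = 1{j = z₀} + Σ_{k ∈ J₀, k ≠ j} p_{kj}(t) − Σ_{k ∈ J, k ≠ j} p_{jk}(t); and (ii) for every j ∈ J₁, p^ρ_j(t) = Σ_{k ∈ J, k ≠ j} p^ρ_{kj}(t) − Σ_{k ∈ J₁, k ≠ j} p^ρ_{jk}(t). -/
open Set Filter MeasureTheory Topology

/-- The scaled occupation function `p^H_j(t) = E[H(t) 1{Z_t = j}]` for a weight process `H`. -/
noncomputable def pOcc {Ω J : Type*} [MeasurableSpace Ω] [DecidableEq J] (P : Measure Ω)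
    (H : ℝ → Ω → ℝ) (Z : ℝ → Ω → J) (j : J) (t : ℝ) : ℝ :=
  ∫ ω, H t ω * (if Z t ω = j then (1:ℝ) else 0) ∂P

/-- The scaled transition function `p^H_{jk}(t) = E[∫_{(0,t]} H(s) N_{jk}(ds)]`. -/
noncomputable def pJump {Ω J : Type*} [MeasurableSpace Ω] (P : Measure Ω)
    (H : ℝ → Ω → ℝ) (Zm Z : ℝ → Ω → J) (j k : J) (t : ℝ) : ℝ :=
  ∫ ω, jumpInt (fun s => H s ω) (fun s => Zm s ω) (fun s => Z s ω) j k t ∂P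

section PathLemmas

variable {J : Type*} [DecidableEq J]

/-- If a path has no jumps on `(a,b]`, it is constant on `[a,b]`. -/
lemma path_const (Z Zm : ℝ → J)
    (hrc : ∀ s : ℝ, 0 ≤ s → ∃ ε > 0, ∀ u ∈ Set.Ico s (s + ε), Z u = Z s)
    (hll : ∀ s : ℝ, 0 < s → ∃ ε > 0, ∀ u ∈ Set.Ioo (s - ε) s, Z u = Zm s)
    {a b : ℝ} (ha : 0 ≤ a) (hab : a ≤ b)
    (hnj : ∀ s ∈ Set.Ioc a b, Zm s = Z s) : Z b = Z a := by
  set T := {u : ℝ | u ∈ Set.Icc a b ∧ ∀ v ∈ Set.Icc a u, Z v = Z a} with hT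
  have haT : a ∈ T := ⟨⟨le_refl a, hab⟩, fun v hv => by
    have : v = a := le_antisymm hv.2 hv.1
    rw [this]⟩
  have hbdd : BddAbove T := ⟨b, fun u hu => hu.1.2⟩
  set c := sSup T with hc
  have hac : a ≤ c := le_csSup hbdd haT
  have hcb : c ≤ b := csSup_le ⟨a, haT⟩ (fun u hu => hu.1.2)
  have hlt : ∀ v ∈ Set.Ico a c, Z v = Z a := by
    intro v hv
    obtain ⟨u, huT, hvu⟩ := exists_lt_of_lt_csSup ⟨a, haT⟩ hv.2
    exact huT.2 v ⟨hv.1, hvu.le⟩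
  have hZc : Z c = Z a := by
    rcases eq_or_lt_of_le hac with h | h
    · rw [← h]
    · have h0c : 0 < c := lt_of_le_of_lt ha h
      obtain ⟨ε, hε, hε'⟩ := hll c h0c
      set v := max a (c - ε / 2) with hv
      have hvc : v < c := max_lt h (by linarith)
      have hv1 : Z v = Z a := hlt v ⟨le_max_left _ _, hvc⟩
      have hv2 : Z v = Zm c := hε' v ⟨lt_of_lt_of_le (by linarith) (le_max_right _ _), hvc⟩
      have h3 := hnj c ⟨h, hcb⟩
      rw [← h3, ← hv2, hv1]
  have hcT : c ∈ T := ⟨⟨hac, hcb⟩, fun v hv => by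
    rcases eq_or_lt_of_le hv.2 with h | h
    · rw [h, hZc]
    · exact hlt v ⟨hv.1, h⟩⟩
  rcases eq_or_lt_of_le hcb with h | h
  · rw [← h, hZc]
  · exfalso
    obtain ⟨ε, hε, hε'⟩ := hrc c (ha.trans hac)
    set d := min (c + ε / 2) b with hd
    have hcd : c < d := lt_min (by linarith) h
    have hdT : d ∈ T := by
      refine ⟨⟨hac.trans hcd.le, min_le_right _ _⟩, fun v hv => ?_⟩
      rcases le_or_gt v c with h' | h'
      · exact hcT.2 v ⟨hv.1, h'⟩
      · have hvd : v < c + ε :=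
          lt_of_le_of_lt hv.2 (lt_of_le_of_lt (min_le_left _ _) (by linarith))
        have : Z v = Z c := hε' v ⟨h'.le, hvd⟩
        rw [this, hZc]
    exact absurd (le_csSup hbdd hdT) (not_le.mpr hcd)

/-- Telescoping identity along the finitely many jumps of a path. -/
lemma path_jump_sum (Z Zm : ℝ → J)
    (hrc : ∀ s : ℝ, 0 ≤ s → ∃ ε > 0, ∀ u ∈ Set.Ico s (s + ε), Z u = Z s)
    (hll : ∀ s : ℝ, 0 < s → ∃ ε > 0, ∀ u ∈ Set.Ioo (s - ε) s, Z u = Zm s)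
    (j : J) :
    ∀ (n : ℕ) (a b : ℝ), 0 ≤ a → a ≤ b → ∀ F : Finset ℝ,
      (∀ s, s ∈ F ↔ s ∈ Set.Ioc a b ∧ Zm s ≠ Z s) → F.card = n →
      (if Z b = j then (1:ℝ) else 0)
        = (if Z a = j then 1 else 0)
          + ∑ s ∈ F, ((if Z s = j then (1:ℝ) else 0) - (if Zm s = j then 1 else 0)) := by
  intro n
  induction n with
  | zero =>
    intro a b ha hab F hF hcard
    have hFe : F = ∅ := Finset.card_eq_zero.mp hcard
    have hnj : ∀ s ∈ Set.Ioc a b, Zm s = Z s := by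
      intro s hs
      by_contra h
      have : s ∈ F := (hF s).mpr ⟨hs, h⟩
      simp [hFe] at this
    rw [path_const Z Zm hrc hll ha hab hnj, hFe]
    simp
  | succ n ih =>
    intro a b ha hab F hF hcard
    have hne : F.Nonempty := Finset.card_pos.mp (by omega)
    set m := F.max' hne with hm
    have hmF : m ∈ F := F.max'_mem hne
    obtain ⟨hmIoc, hmj⟩ := (hF m).mp hmF
    have ham : a < m := hmIoc.1
    have h0m : 0 < m := lt_of_le_of_lt ha ham
    have hZbm : Z b = Z m := by
      apply path_const Z Zm hrc hll h0m.le hmIoc.2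
      intro s hs
      by_contra h
      have hsF : s ∈ F := (hF s).mpr ⟨⟨ham.trans hs.1, hs.2⟩, h⟩
      exact absurd (F.le_max' s hsF) (not_le.mpr hs.1)
    obtain ⟨ε, hε, hεp⟩ := hll m h0m
    set L := F.erase m with hL
    have hLlt : ∀ s ∈ insert a L, s < m := by
      intro s hs
      rcases Finset.mem_insert.mp hs with h | h
      · rw [h]; exact ham
      · have h1 := Finset.mem_of_mem_erase h
        have h2 := Finset.ne_of_mem_erase h
        exact lt_of_le_of_ne (F.le_max' s h1) h2
    set γ0 := (insert a L).max' ⟨a, Finset.mem_insert_self _ _⟩ with hγ0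
    have hγ0m : γ0 < m := hLlt _ ((insert a L).max'_mem _)
    set γ := max γ0 (m - ε / 2) with hγ
    have hγm : γ < m := max_lt hγ0m (by linarith)
    set u₀ := (γ + m) / 2 with hu₀
    have hγu : γ < u₀ := by rw [hu₀]; linarith
    have hu₀m : u₀ < m := by rw [hu₀]; linarith
    have haγ : a ≤ γ0 := (insert a L).le_max' a (Finset.mem_insert_self _ _)
    have hau : a < u₀ := lt_of_le_of_lt (haγ.trans (le_max_left _ _)) hγu
    have hLmem : ∀ s, s ∈ L ↔ s ∈ Set.Ioc a u₀ ∧ Zm s ≠ Z s := by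
      intro s
      constructor
      · intro hs
        have h1 := Finset.mem_of_mem_erase hs
        obtain ⟨hIoc, hne'⟩ := (hF s).mp h1
        have hsγ : s ≤ γ0 := (insert a L).le_max' s (Finset.mem_insert_of_mem hs)
        exact ⟨⟨hIoc.1, le_of_lt (lt_of_le_of_lt (hsγ.trans (le_max_left _ _)) hγu)⟩, hne'⟩
      · rintro ⟨hIoc, hne'⟩
        have hsm : s < m := lt_of_le_of_lt hIoc.2 hu₀m
        have hsF : s ∈ F := (hF s).mpr ⟨⟨hIoc.1, hsm.le.trans hmIoc.2⟩, hne'⟩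
        exact Finset.mem_erase.mpr ⟨ne_of_lt hsm, hsF⟩
    have hLcard : L.card = n := by
      rw [hL, Finset.card_erase_of_mem hmF, hcard]; omega
    have hih := ih a u₀ ha hau.le L hLmem hLcard
    have hu0m : Z u₀ = Zm m := by
      apply hεp
      constructor
      · exact lt_of_lt_of_le (by linarith : m - ε < m - ε / 2) ((le_max_right _ _).trans hγu.le)
      · exact hu₀m
    rw [hu0m] at hih
    rw [hZbm, ← Finset.add_sum_erase F _ hmF, ← hL]
    linarith [hih]

lemma jump_set_eq (Z Zm : ℝ → J)
    (hfin : ∀ u : ℝ, {s : ℝ | s ∈ Set.Ioc 0 u ∧ Zm s ≠ Z s}.Finite)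
    (p q : J) (hpq : p ≠ q) (t : ℝ) :
    {s : ℝ | s ∈ Set.Ioc 0 t ∧ Zm s = p ∧ Z s = q}
      = ↑((hfin t).toFinset.filter (fun s => Zm s = p ∧ Z s = q)) := by
  ext s
  simp only [Set.mem_setOf_eq, Finset.coe_filter, Finset.mem_coe, Set.Finite.mem_toFinset]
  constructor
  · rintro ⟨h1, h2, h3⟩
    exact ⟨⟨h1, by rw [h2, h3]; exact hpq⟩, h2, h3⟩
  · rintro ⟨⟨h1, _⟩, h2, h3⟩
    exact ⟨h1, h2, h3⟩

lemma jumpCount_eq_card (Z Zm : ℝ → J)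
    (hfin : ∀ u : ℝ, {s : ℝ | s ∈ Set.Ioc 0 u ∧ Zm s ≠ Z s}.Finite)
    (p q : J) (hpq : p ≠ q) (t : ℝ) :
    jumpCount Zm Z p q t
      = ((hfin t).toFinset.filter (fun s => Zm s = p ∧ Z s = q)).card := by
  have : jumpCount Zm Z p q t
      = ({s : ℝ | s ∈ Set.Ioc 0 t ∧ Zm s = p ∧ Z s = q}).ncard := by
    rw [jumpCount]; exact Nat.card_coe_set_eq _
  rw [this, jump_set_eq Z Zm hfin p q hpq t, Set.ncard_coe_finset]

lemma jumpInt_eq_sum (h : ℝ → ℝ) (Z Zm : ℝ → J)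
    (hfin : ∀ u : ℝ, {s : ℝ | s ∈ Set.Ioc 0 u ∧ Zm s ≠ Z s}.Finite)
    (p q : J) (hpq : p ≠ q) (t : ℝ) :
    jumpInt h Zm Z p q t
      = ∑ s ∈ (hfin t).toFinset.filter (fun s => Zm s = p ∧ Z s = q), h s := by
  rw [jumpInt, jump_set_eq Z Zm hfin p q hpq t, finsum_mem_coe_finset]

/-- If the weight is constant on the jump set, `jumpInt = c * jumpCount`. -/
lemma jumpInt_const (h : ℝ → ℝ) (Z Zm : ℝ → J)
    (hfin : ∀ u : ℝ, {s : ℝ | s ∈ Set.Ioc 0 u ∧ Zm s ≠ Z s}.Finite)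
    (p q : J) (hpq : p ≠ q) (t : ℝ) (c : ℝ)
    (hc : ∀ s, s ∈ Set.Ioc 0 t → Zm s = p → Z s = q → h s = c) :
    jumpInt h Zm Z p q t = c * (jumpCount Zm Z p q t : ℝ) := by
  rw [jumpInt_eq_sum h Z Zm hfin p q hpq t, jumpCount_eq_card Z Zm hfin p q hpq t]
  rw [Finset.sum_congr rfl (fun s hs => by
    simp only [Finset.mem_filter, Set.Finite.mem_toFinset, Set.mem_setOf_eq] at hs
    exact hc s hs.1.1 hs.2.1 hs.2.2)]
  rw [Finset.sum_const, nsmul_eq_mul, mul_comm]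

/-- Pathwise master counting identity. -/
lemma path_master [Fintype J] (Z Zm : ℝ → J)
    (hrc : ∀ s : ℝ, 0 ≤ s → ∃ ε > 0, ∀ u ∈ Set.Ico s (s + ε), Z u = Z s)
    (hll : ∀ s : ℝ, 0 < s → ∃ ε > 0, ∀ u ∈ Set.Ioo (s - ε) s, Z u = Zm s)
    (hfin : ∀ u : ℝ, {s : ℝ | s ∈ Set.Ioc 0 u ∧ Zm s ≠ Z s}.Finite)
    (j : J) (t : ℝ) (ht : 0 ≤ t) :
    (if Z t = j then (1:ℝ) else 0)
      = (if Z 0 = j then 1 else 0)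
        + ∑ k ∈ Finset.univ.erase j, (jumpCount Zm Z k j t : ℝ)
        - ∑ k ∈ Finset.univ.erase j, (jumpCount Zm Z j k t : ℝ) := by
  classical
  set F := (hfin t).toFinset with hFdef
  have hFmem : ∀ s, s ∈ F ↔ s ∈ Set.Ioc 0 t ∧ Zm s ≠ Z s := fun s => (hfin t).mem_toFinset
  have key := path_jump_sum Z Zm hrc hll j F.card 0 t le_rfl ht F hFmem rfl
  have hins : ∀ s ∈ F, (if Z s = j then (1:ℝ) else 0)
      = ∑ k ∈ Finset.univ.erase j, (if Zm s = k ∧ Z s = j then (1:ℝ) else 0) := by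
    intro s hs
    have hne := ((hFmem s).mp hs).2
    by_cases h : Z s = j
    · have hZm : Zm s ≠ j := fun hc => hne (hc.trans h.symm)
      rw [if_pos h,
        Finset.sum_eq_single_of_mem (Zm s) (Finset.mem_erase.mpr ⟨hZm, Finset.mem_univ _⟩)]
      · rw [if_pos ⟨rfl, h⟩]
      · intro b _ hbne
        rw [if_neg]; rintro ⟨h1, _⟩; exact hbne h1.symm
    · rw [if_neg h, Finset.sum_eq_zero]
      intro k _
      rw [if_neg]; rintro ⟨_, h2⟩; exact h h2
  have houts : ∀ s ∈ F, (if Zm s = j then (1:ℝ) else 0)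
      = ∑ k ∈ Finset.univ.erase j, (if Zm s = j ∧ Z s = k then (1:ℝ) else 0) := by
    intro s hs
    have hne := ((hFmem s).mp hs).2
    by_cases h : Zm s = j
    · have hZ : Z s ≠ j := fun hc => hne (h.trans hc.symm)
      rw [if_pos h,
        Finset.sum_eq_single_of_mem (Z s) (Finset.mem_erase.mpr ⟨hZ, Finset.mem_univ _⟩)]
      · rw [if_pos ⟨h, rfl⟩]
      · intro b _ hbne
        rw [if_neg]; rintro ⟨_, h2⟩; exact hbne h2.symm
    · rw [if_neg h, Finset.sum_eq_zero]
      intro k _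
      rw [if_neg]; rintro ⟨h1, _⟩; exact h h1
  have h1 : ∑ s ∈ F, ((if Z s = j then (1:ℝ) else 0) - (if Zm s = j then 1 else 0))
      = ∑ k ∈ Finset.univ.erase j, (jumpCount Zm Z k j t : ℝ)
        - ∑ k ∈ Finset.univ.erase j, (jumpCount Zm Z j k t : ℝ) := by
    rw [Finset.sum_sub_distrib]
    congr 1
    · rw [Finset.sum_congr rfl hins, Finset.sum_comm]
      refine Finset.sum_congr rfl (fun k hk => ?_)
      rw [Finset.sum_boole, jumpCount_eq_card Z Zm hfin k j (Finset.ne_of_mem_erase hk) t]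
    · rw [Finset.sum_congr rfl houts, Finset.sum_comm]
      refine Finset.sum_congr rfl (fun k hk => ?_)
      rw [Finset.sum_boole, jumpCount_eq_card Z Zm hfin j k (Finset.ne_of_mem_erase hk).symm t]
  rw [key, h1]
  ring

end PathLemmas

/-- Helper: integral of `C + f - g` for a probability measure. -/
lemma integral_const_add_sub {Ω : Type*} [MeasurableSpace Ω] (P : Measure Ω)
    [IsProbabilityMeasure P] (C : ℝ) (f g : Ω → ℝ)
    (hf : Integrable f P) (hg : Integrable g P) :
    ∫ ω, (C + f ω - g ω) ∂P = C + (∫ ω, f ω ∂P) - ∫ ω, g ω ∂P := by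
  have h1 : Integrable (fun ω => C + f ω) P := by exact (integrable_const C).add hf
  have h2 : ∫ ω, (C + f ω) ∂P = (∫ _ω : Ω, C ∂P) + ∫ ω, f ω ∂P :=
    integral_add (integrable_const C) hf
  rw [integral_sub h1 hg, h2, integral_const]
  simp

/-- Forward integral equations in expectation form: for every `t ≥ 0`,
(i) for `j ∈ J₀`: `p_j(t) = 1{j = z₀} + ∑_{k ∈ J₀, k ≠ j} p_{kj}(t) − ∑_{k ∈ J, k ≠ j} p_{jk}(t)`;
(ii) for `j ∈ J₁`: `p^ρ_j(t) = ∑_{k ∈ J, k ≠ j} p^ρ_{kj}(t) − ∑_{k ∈ J₁, k ≠ j} p^ρ_{jk}(t)`. -/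
theorem forward_integral_equations_expectation
    {Ω J : Type*} [MeasurableSpace Ω] [MeasurableSpace J] [MeasurableSingletonClass J]
    [Fintype J] [DecidableEq J]
    (P : Measure Ω) [IsProbabilityMeasure P]
    (z0 : J) (J0 : Finset J) (hz0 : z0 ∈ J0)
    (Z Zm : ℝ → Ω → J)
    (hZ0 : ∀ ω, Z 0 ω = z0)
    (hjm : Measurable fun p : ℝ × Ω => Z p.1 p.2)
    (hrc : ∀ ω, ∀ s : ℝ, 0 ≤ s → ∃ ε > 0, ∀ u ∈ Set.Ico s (s + ε), Z u ω = Z s ω)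
    (hll : ∀ ω, ∀ s : ℝ, 0 < s → ∃ ε > 0, ∀ u ∈ Set.Ioo (s - ε) s, Z u ω = Zm s ω)
    (hfin : ∀ ω, ∀ t : ℝ, {s : ℝ | s ∈ Set.Ioc 0 t ∧ Zm s ω ≠ Z s ω}.Finite)
    (hNint : ∀ j k : J, j ≠ k → ∀ t : ℝ, 0 ≤ t →
      Integrable (fun ω => (jumpCount (fun s => Zm s ω) (fun s => Z s ω) j k t : ℝ)) P)
    (habs : ∀ ω, ∀ s u : ℝ, 0 ≤ s → s ≤ u → Z s ω ∉ J0 → Z u ω ∉ J0)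
    (ρ : ℝ → J → J → ℝ)
    (hρm : Measurable fun q : ℝ × J × J => ρ q.1 q.2.1 q.2.2)
    (hρnn : ∀ t j k, 0 ≤ ρ t j k)
    (hρb : ∀ T : ℝ, ∃ M, ∀ t ∈ Set.Icc (0:ℝ) T, ∀ j k, ρ t j k ≤ M)
    (t : ℝ) (ht : 0 ≤ t) :
    (∀ j ∈ J0,
      pOcc P (fun _ _ => (1:ℝ)) Z j t
        = (if j = z0 then 1 else 0)
          + ∑ k ∈ J0.erase j, pJump P (fun _ _ => (1:ℝ)) Zm Z k j t
          - ∑ k ∈ Finset.univ.erase j, pJump P (fun _ _ => (1:ℝ)) Zm Z j k t)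
    ∧
    (∀ j ∈ J0ᶜ,
      pOcc P (fun s ω => scaleH J0 ρ (fun u => Zm u ω) (fun u => Z u ω) s) Z j t
        = ∑ k ∈ Finset.univ.erase j,
            pJump P (fun s ω => scaleH J0 ρ (fun u => Zm u ω) (fun u => Z u ω) s) Zm Z k j t
          - ∑ k ∈ J0ᶜ.erase j,
            pJump P (fun s ω => scaleH J0 ρ (fun u => Zm u ω) (fun u => Z u ω) s) Zm Z j k t) := by
  classical
  have hZs : ∀ s : ℝ, Measurable (fun ω => Z s ω) := fun s =>
    hjm.comp measurable_prodMk_left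
  have hJmeas : ∀ S : Set J, MeasurableSet S := fun S => S.toFinite.measurableSet
  set τ : Ω → ℝ := fun ω => hitTime J0 (fun s => Z s ω) with hτdef
  have hτ_eq : ∀ ω, τ ω = sInf {u : ℝ | 0 < u ∧ Z u ω ∉ J0} := fun ω => rfl
  have hτ_nonneg : ∀ ω, 0 ≤ τ ω := by
    intro ω
    rw [hτ_eq]
    exact Real.sInf_nonneg (fun u hu => hu.1.le)
  have hτ_le : ∀ ω (s : ℝ), 0 < s → Z s ω ∉ J0 → 0 < τ ω ∧ τ ω ≤ s := by
    intro ω s hs hZs'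
    have hbdd : BddBelow {u : ℝ | 0 < u ∧ Z u ω ∉ J0} := ⟨0, fun u hu => hu.1.le⟩
    constructor
    · obtain ⟨ε, hε, hεp⟩ := hrc ω 0 le_rfl
      have hle : ε ≤ τ ω := by
        rw [hτ_eq]
        refine le_csInf ⟨s, hs, hZs'⟩ (fun u hu => ?_)
        by_contra hlt
        push_neg at hlt
        exact hu.2 (by
          rw [hεp u ⟨hu.1.le, by rw [zero_add]; exact hlt⟩, hZ0]
          exact hz0)
      linarith
    · rw [hτ_eq]; exact csInf_le hbdd ⟨hs, hZs'⟩
  have hE : ∀ ω (s : ℝ), 0 < s → Zm s ω ∉ J0 → Z s ω ∉ J0 := by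
    intro ω s hs hzm
    obtain ⟨ε, hε, hεp⟩ := hll ω s hs
    set u := max (s / 2) (s - ε / 2) with hu
    have hu0 : 0 < u := lt_of_lt_of_le (half_pos hs) (le_max_left _ _)
    have hus : u < s := max_lt (by linarith) (by linarith)
    have huε : s - ε < u := lt_of_lt_of_le (by linarith) (le_max_right _ _)
    have hZu : Z u ω = Zm s ω := hεp u ⟨huε, hus⟩
    exact habs ω u s hu0.le hus.le (by rw [hZu]; exact hzm)
  have hτ_of_jump : ∀ (ω) (s : ℝ), s ∈ Set.Ioc 0 t → Z s ω ∉ J0 →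
      0 < τ ω ∧ τ ω ≤ t := by
    intro ω s hs h
    obtain ⟨h1, h2⟩ := hτ_le ω s hs.1 h
    exact ⟨h1, h2.trans hs.2⟩
  have hEverJ0 : MeasurableSet {ω | ∀ n : ℕ, Z (n : ℝ) ω ∈ J0} := by
    have h : {ω | ∀ n : ℕ, Z (n : ℝ) ω ∈ J0}
        = ⋂ n : ℕ, (fun ω => Z (n : ℝ) ω) ⁻¹' {j : J | j ∈ J0} := by
      ext ω; simp
    rw [h]
    exact MeasurableSet.iInter fun n => (hZs _) (hJmeas _)
  have hτ_meas : Measurable τ := by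
    apply measurable_of_Iic
    intro a
    rcases lt_or_ge a 0 with haneg | ha0
    · have h : τ ⁻¹' Set.Iic a = ∅ := by
        ext ω
        simp only [Set.mem_preimage, Set.mem_Iic, Set.mem_empty_iff_false, iff_false, not_le]
        exact lt_of_lt_of_le haneg (hτ_nonneg ω)
      rw [h]; exact MeasurableSet.empty
    · have h : τ ⁻¹' Set.Iic a
          = {ω | Z a ω ∉ J0} ∪ {ω | ∀ n : ℕ, Z (n : ℝ) ω ∈ J0} := by
        ext ω
        simp only [Set.mem_preimage, Set.mem_Iic, Set.mem_union, Set.mem_setOf_eq]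
        constructor
        · intro hτa
          by_contra hcon
          push_neg at hcon
          obtain ⟨hZa, n, hn⟩ := hcon
          have hn0 : (0 : ℝ) < (n : ℝ) := by
            rcases Nat.eq_zero_or_pos n with h' | h'
            · exfalso; apply hn; subst h'; rw [Nat.cast_zero, hZ0]; exact hz0
            · exact_mod_cast h'
          obtain ⟨ε, hε, hεp⟩ := hrc ω a ha0
          have hlow : ∀ u ∈ {u : ℝ | 0 < u ∧ Z u ω ∉ J0}, a + ε ≤ u := by
            intro u hu
            by_contra hlt
            push_neg at hlt
            rcases le_or_gt a u with h' | h'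
            · exact hu.2 (by rw [hεp u ⟨h', hlt⟩]; exact hZa)
            · exact (habs ω u a hu.1.le h'.le hu.2) hZa
          have hge : a + ε ≤ τ ω := by
            rw [hτ_eq]; exact le_csInf ⟨(n : ℝ), hn0, hn⟩ hlow
          linarith
        · intro h'
          rcases h' with h' | h'
          · have ha0' : (0 : ℝ) < a := by
              rcases eq_or_lt_of_le ha0 with h'' | h''
              · exfalso; apply h'; rw [← h'', hZ0]; exact hz0
              · exact h''
            exact (hτ_le ω a ha0' h').2
          · have hempty : {u : ℝ | 0 < u ∧ Z u ω ∉ J0} = ∅ := by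
              ext u
              simp only [Set.mem_setOf_eq, Set.mem_empty_iff_false, iff_false, not_and]
              intro hu0 hu
              exact absurd (h' (Nat.ceil u))
                (habs ω u (Nat.ceil u) hu0.le (Nat.le_ceil u) hu)
            rw [hτ_eq, hempty, Real.sInf_empty]
            exact ha0
      rw [h]
      exact MeasurableSet.union ((hZs a) (hJmeas {j : J | j ∉ J0})) hEverJ0
  have hZτ_meas : Measurable (fun ω => Z (τ ω) ω) :=
    hjm.comp (hτ_meas.prodMk measurable_id)
  set A : J → Set Ω := fun j' => {ω | ∃ δ : ℚ, 0 < δ ∧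
    ∀ q : ℚ, (q : ℝ) ∈ Set.Ioo (τ ω - (δ : ℝ)) (τ ω) → Z (q : ℝ) ω = j'} with hA
  have hA_meas : ∀ j', MeasurableSet (A j') := by
    intro j'
    have h : A j' = ⋃ δ : ℚ, ⋃ _ : 0 < δ, ⋂ q : ℚ,
        ({ω | τ ω - (δ : ℝ) < (q : ℝ)} ∩ {ω | (q : ℝ) < τ ω})ᶜ ∪ {ω | Z (q : ℝ) ω = j'} := by
      ext ω
      simp only [hA, Set.mem_setOf_eq, Set.mem_iUnion, Set.mem_iInter, Set.mem_union,
        Set.mem_compl_iff, Set.mem_inter_iff, Set.mem_Ioo]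
      constructor
      · rintro ⟨δ, hδ, hq⟩
        refine ⟨δ, hδ, fun q => ?_⟩
        by_cases hmem : τ ω - (δ : ℝ) < (q : ℝ) ∧ (q : ℝ) < τ ω
        · exact Or.inr (hq q hmem)
        · exact Or.inl hmem
      · rintro ⟨δ, hδ, hq⟩
        refine ⟨δ, hδ, fun q hmem => ?_⟩
        rcases hq q with h' | h'
        · exact absurd hmem h'
        · exact h'
    rw [h]
    refine MeasurableSet.iUnion fun δ => MeasurableSet.iUnion fun _ =>
      MeasurableSet.iInter fun q => MeasurableSet.union ?_ ?_
    · exact ((measurableSet_lt (hτ_meas.sub measurable_const) measurable_const).inter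
        (measurableSet_lt measurable_const hτ_meas)).compl
    · exact (hZs _) (hJmeas {j : J | j = j'})
  set c : Ω → ℝ := fun ω => ∑ j' : J,
    (A j').indicator (fun _ => (1:ℝ)) ω * ρ (τ ω) j' (Z (τ ω) ω) with hcdef
  have hc_meas : Measurable c := by
    apply Finset.measurable_sum
    intro j' _
    exact (measurable_const.indicator (hA_meas j')).mul
      (hρm.comp (hτ_meas.prodMk (measurable_const.prodMk hZτ_meas)))
  have hc_val : ∀ ω, 0 < τ ω → c ω = ρ (τ ω) (Zm (τ ω) ω) (Z (τ ω) ω) := by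
    intro ω hτ0
    obtain ⟨ε, hε, hεp⟩ := hll ω (τ ω) hτ0
    have hAiff : ∀ j', ω ∈ A j' ↔ j' = Zm (τ ω) ω := by
      intro j'
      rw [hA]
      simp only [Set.mem_setOf_eq]
      constructor
      · rintro ⟨δ, hδ, hq⟩
        have hδ' : (0:ℝ) < (δ : ℝ) := by exact_mod_cast hδ
        have hmax : max (τ ω - ε) (τ ω - (δ : ℝ)) < τ ω := max_lt (by linarith) (by linarith)
        obtain ⟨q, hq1, hq2⟩ := exists_rat_btwn hmax
        have h1 : Z (q : ℝ) ω = j' := hq q ⟨lt_of_le_of_lt (le_max_right _ _) hq1, hq2⟩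
        have h2 : Z (q : ℝ) ω = Zm (τ ω) ω :=
          hεp (q : ℝ) ⟨lt_of_le_of_lt (le_max_left _ _) hq1, hq2⟩
        rw [← h1, h2]
      · rintro rfl
        obtain ⟨δ, hδ1, hδ2⟩ := exists_rat_btwn hε
        have hδ0 : 0 < δ := by exact_mod_cast hδ1
        refine ⟨δ, hδ0, fun q hq' => ?_⟩
        refine hεp (q : ℝ) ⟨?_, hq'.2⟩
        have h3 : τ ω - ε < τ ω - (δ : ℝ) := by linarith [hδ2]
        linarith [hq'.1]
    simp only [hcdef]
    rw [Finset.sum_eq_single_of_mem (Zm (τ ω) ω) (Finset.mem_univ _)]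
    · rw [Set.indicator_of_mem ((hAiff _).mpr rfl), one_mul]
    · intro b _ hbne
      rw [Set.indicator_of_notMem (fun hc' => hbne ((hAiff b).mp hc')), zero_mul]
  obtain ⟨M₀, hM₀⟩ := hρb t
  have hc_bd : ∀ ω, 0 < τ ω → τ ω ≤ t → |c ω| ≤ max M₀ 0 := by
    intro ω h1 h2
    rw [hc_val ω h1, abs_of_nonneg (hρnn _ _ _)]
    exact le_trans (hM₀ (τ ω) ⟨h1.le, h2⟩ _ _) (le_max_left _ _)
  have hN_pos : ∀ (p q : J) ω,
      (jumpCount (fun s => Zm s ω) (fun s => Z s ω) p q t : ℝ) ≠ 0 →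
      ∃ s, s ∈ Set.Ioc 0 t ∧ Zm s ω = p ∧ Z s ω = q := by
    intro p q ω h
    by_contra hcon
    push_neg at hcon
    apply h
    have hemp : IsEmpty {s : ℝ // s ∈ Set.Ioc 0 t ∧ Zm s ω = p ∧ Z s ω = q} :=
      ⟨fun x => hcon x.1 x.2.1 x.2.2.1 x.2.2.2⟩
    rw [jumpCount, Nat.card_of_isEmpty]
    norm_num
  have hint_mul : ∀ p q : J, p ≠ q →
      (∀ ω, (jumpCount (fun s => Zm s ω) (fun s => Z s ω) p q t : ℝ) ≠ 0 →
        0 < τ ω ∧ τ ω ≤ t) →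
      Integrable (fun ω => c ω *
        (jumpCount (fun s => Zm s ω) (fun s => Z s ω) p q t : ℝ)) P := by
    intro p q hpq hsup
    refine Integrable.mono' ((hNint p q hpq t ht).const_mul (max M₀ 0))
      (hc_meas.aestronglyMeasurable.mul (hNint p q hpq t ht).aestronglyMeasurable)
      (Filter.Eventually.of_forall fun ω => ?_)
    rw [Real.norm_eq_abs, abs_mul, Nat.abs_cast]
    by_cases h : (jumpCount (fun s => Zm s ω) (fun s => Z s ω) p q t : ℝ) = 0
    · rw [h, mul_zero, mul_zero]
    · obtain ⟨h1, h2⟩ := hsup ω h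
      exact mul_le_mul_of_nonneg_right (hc_bd ω h1 h2) (Nat.cast_nonneg _)
  constructor
  · -- Part (i)
    intro j hj
    have hmaster : ∀ ω, (if Z t ω = j then (1:ℝ) else 0)
        = (if j = z0 then (1:ℝ) else 0)
          + ∑ k ∈ Finset.univ.erase j,
              (jumpCount (fun s => Zm s ω) (fun s => Z s ω) k j t : ℝ)
          - ∑ k ∈ Finset.univ.erase j,
              (jumpCount (fun s => Zm s ω) (fun s => Z s ω) j k t : ℝ) := by
      intro ω
      have h := path_master (fun s => Z s ω) (fun s => Zm s ω)
        (hrc ω) (hll ω) (hfin ω) j t ht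
      have h0 : (if Z 0 ω = j then (1:ℝ) else 0) = (if j = z0 then 1 else 0) := by
        rw [hZ0]
        by_cases h' : j = z0
        · rw [if_pos h'.symm, if_pos h']
        · rw [if_neg (fun h'' => h' h''.symm), if_neg h']
      rw [h, h0]
    have hS1 : Integrable (fun ω => ∑ k ∈ Finset.univ.erase j,
        (jumpCount (fun s => Zm s ω) (fun s => Z s ω) k j t : ℝ)) P :=
      integrable_finset_sum _ (fun k hk => hNint k j (Finset.ne_of_mem_erase hk) t ht)
    have hS2 : Integrable (fun ω => ∑ k ∈ Finset.univ.erase j,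
        (jumpCount (fun s => Zm s ω) (fun s => Z s ω) j k t : ℝ)) P :=
      integrable_finset_sum _ (fun k hk => hNint j k (Finset.ne_of_mem_erase hk).symm t ht)
    have hpocc : pOcc P (fun _ _ => (1:ℝ)) Z j t
        = (if j = z0 then (1:ℝ) else 0)
          + ∑ k ∈ Finset.univ.erase j,
              ∫ ω, (jumpCount (fun s => Zm s ω) (fun s => Z s ω) k j t : ℝ) ∂P
          - ∑ k ∈ Finset.univ.erase j,
              ∫ ω, (jumpCount (fun s => Zm s ω) (fun s => Z s ω) j k t : ℝ) ∂P := by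
      rw [pOcc,
        integral_congr_ae (Filter.Eventually.of_forall (fun ω => by
          rw [one_mul, hmaster ω])),
        integral_const_add_sub P _ _ _ hS1 hS2,
        integral_finset_sum _ (fun k hk => hNint k j (Finset.ne_of_mem_erase hk) t ht),
        integral_finset_sum _ (fun k hk => hNint j k (Finset.ne_of_mem_erase hk).symm t ht)]
    have hpj : ∀ (p q : J), p ≠ q → pJump P (fun _ _ => (1:ℝ)) Zm Z p q t
        = ∫ ω, (jumpCount (fun s => Zm s ω) (fun s => Z s ω) p q t : ℝ) ∂P := by
      intro p q hpq
      rw [pJump]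
      refine integral_congr_ae (Filter.Eventually.of_forall (fun ω => ?_))
      show jumpInt (fun _ => (1:ℝ)) (fun s => Zm s ω) (fun s => Z s ω) p q t
        = ((jumpCount (fun s => Zm s ω) (fun s => Z s ω) p q t : ℕ) : ℝ)
      rw [jumpInt_const _ _ _ (hfin ω) p q hpq t 1 (fun _ _ _ _ => rfl), one_mul]
    have hsum1 : ∑ k ∈ J0.erase j, pJump P (fun _ _ => (1:ℝ)) Zm Z k j t
        = ∑ k ∈ Finset.univ.erase j, pJump P (fun _ _ => (1:ℝ)) Zm Z k j t := by
      apply Finset.sum_subset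
      · intro k hk
        exact Finset.mem_erase.mpr ⟨Finset.ne_of_mem_erase hk, Finset.mem_univ _⟩
      · intro k hk hknot
        have hkj : k ≠ j := Finset.ne_of_mem_erase hk
        have hkJ0 : k ∉ J0 := fun h => hknot (Finset.mem_erase.mpr ⟨hkj, h⟩)
        rw [pJump]
        have hz : ∀ ω, jumpInt (fun s => (1:ℝ))
            (fun s => Zm s ω) (fun s => Z s ω) k j t = 0 := by
          intro ω
          have hset : {s : ℝ | s ∈ Set.Ioc 0 t ∧ Zm s ω = k ∧ Z s ω = j} = ∅ := by
            ext s
            simp only [Set.mem_setOf_eq, Set.mem_empty_iff_false, iff_false]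
            rintro ⟨hs, hzm, hzs⟩
            exact hE ω s hs.1 (by rw [hzm]; exact hkJ0) (by rw [hzs]; exact hj)
          rw [jumpInt, hset, finsum_mem_empty]
        rw [integral_congr_ae (Filter.Eventually.of_forall hz), integral_zero]
    rw [hpocc, hsum1,
      Finset.sum_congr rfl (fun k hk => hpj k j (Finset.ne_of_mem_erase hk)),
      Finset.sum_congr rfl (fun k hk => hpj j k (Finset.ne_of_mem_erase hk).symm)]
  · -- Part (ii)
    intro j hj
    have hjJ0 : j ∉ J0 := Finset.mem_compl.mp hj
    set Hf : ℝ → Ω → ℝ :=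
      fun s ω => scaleH J0 ρ (fun u => Zm u ω) (fun u => Z u ω) s with hHf
    have hscale : ∀ ω (s : ℝ), Z s ω ∉ J0 →
        Hf s ω = ρ (τ ω) (Zm (τ ω) ω) (Z (τ ω) ω) := by
      intro ω s h
      simp only [hHf, scaleH, if_neg h]
      rfl
    have hHc : ∀ ω (s : ℝ), 0 < s → Z s ω ∉ J0 → Hf s ω = c ω := by
      intro ω s hs h
      rw [hscale ω s h, ← hc_val ω (hτ_le ω s hs h).1]
    have hjump_entry : ∀ k : J, k ≠ j → ∀ ω,
        jumpInt (fun s => Hf s ω) (fun s => Zm s ω) (fun s => Z s ω) k j t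
          = c ω * (jumpCount (fun s => Zm s ω) (fun s => Z s ω) k j t : ℝ) := by
      intro k hk ω
      apply jumpInt_const _ _ _ (hfin ω) k j hk t
      intro s hs hzm hzs
      exact hHc ω s hs.1 (by rw [hzs]; exact hjJ0)
    have hjump_exit : ∀ k : J, j ≠ k → ∀ ω,
        jumpInt (fun s => Hf s ω) (fun s => Zm s ω) (fun s => Z s ω) j k t
          = c ω * (jumpCount (fun s => Zm s ω) (fun s => Z s ω) j k t : ℝ) := by
      intro k hk ω
      apply jumpInt_const _ _ _ (hfin ω) j k hk t
      intro s hs hzm hzs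
      exact hHc ω s hs.1 (hE ω s hs.1 (by rw [hzm]; exact hjJ0))
    have hsup_entry : ∀ k : J, ∀ ω,
        (jumpCount (fun s => Zm s ω) (fun s => Z s ω) k j t : ℝ) ≠ 0 →
        0 < τ ω ∧ τ ω ≤ t := by
      intro k ω h
      obtain ⟨s, hs, _, hzs⟩ := hN_pos k j ω h
      exact hτ_of_jump ω s hs (by rw [hzs]; exact hjJ0)
    have hsup_exit : ∀ k : J, ∀ ω,
        (jumpCount (fun s => Zm s ω) (fun s => Z s ω) j k t : ℝ) ≠ 0 →
        0 < τ ω ∧ τ ω ≤ t := by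
      intro k ω h
      obtain ⟨s, hs, hzm, _⟩ := hN_pos j k ω h
      exact hτ_of_jump ω s hs (hE ω s hs.1 (by rw [hzm]; exact hjJ0))
    have hptw : ∀ ω, Hf t ω * (if Z t ω = j then (1:ℝ) else 0)
        = ∑ k ∈ Finset.univ.erase j,
            c ω * (jumpCount (fun s => Zm s ω) (fun s => Z s ω) k j t : ℝ)
          - ∑ k ∈ Finset.univ.erase j,
            c ω * (jumpCount (fun s => Zm s ω) (fun s => Z s ω) j k t : ℝ) := by
      intro ω
      by_cases hZt : Z t ω ∈ J0
      · have hzero1 : ∀ k : J,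
            (jumpCount (fun s => Zm s ω) (fun s => Z s ω) k j t : ℝ) = 0 := by
          intro k
          have hemp : IsEmpty {s : ℝ // s ∈ Set.Ioc 0 t ∧ Zm s ω = k ∧ Z s ω = j} := by
            refine ⟨fun x => ?_⟩
            obtain ⟨hs, _, hzs⟩ := x.2
            exact habs ω x.1 t hs.1.le hs.2 (by rw [hzs]; exact hjJ0) hZt
          rw [jumpCount, Nat.card_of_isEmpty]
          norm_num
        have hzero2 : ∀ k : J,
            (jumpCount (fun s => Zm s ω) (fun s => Z s ω) j k t : ℝ) = 0 := by
          intro k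
          have hemp : IsEmpty {s : ℝ // s ∈ Set.Ioc 0 t ∧ Zm s ω = j ∧ Z s ω = k} := by
            refine ⟨fun x => ?_⟩
            obtain ⟨hs, hzm, _⟩ := x.2
            exact habs ω x.1 t hs.1.le hs.2
              (hE ω x.1 hs.1 (by rw [hzm]; exact hjJ0)) hZt
          rw [jumpCount, Nat.card_of_isEmpty]
          norm_num
        rw [if_neg (fun h => hjJ0 (by rw [← h]; exact hZt)), mul_zero,
          Finset.sum_eq_zero (fun k _ => by rw [hzero1 k, mul_zero]),
          Finset.sum_eq_zero (fun k _ => by rw [hzero2 k, mul_zero]), sub_zero]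
      · have ht0 : 0 < t := by
          rcases eq_or_lt_of_le ht with h' | h'
          · exfalso; apply hZt; rw [← h', hZ0]; exact hz0
          · exact h'
        rw [hHc ω t ht0 hZt]
        have hmas := path_master (fun s => Z s ω) (fun s => Zm s ω)
          (hrc ω) (hll ω) (hfin ω) j t ht
        have h0 : (if Z 0 ω = j then (1:ℝ) else 0) = 0 :=
          if_neg (fun h => hjJ0 (by rw [hZ0] at h; rw [← h]; exact hz0))
        rw [h0, zero_add] at hmas
        rw [hmas, mul_sub, Finset.mul_sum, Finset.mul_sum]
    have hint_e : ∀ k ∈ Finset.univ.erase j, Integrable (fun ω =>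
        c ω * (jumpCount (fun s => Zm s ω) (fun s => Z s ω) k j t : ℝ)) P :=
      fun k hk => hint_mul k j (Finset.ne_of_mem_erase hk) (hsup_entry k)
    have hint_x : ∀ k ∈ Finset.univ.erase j, Integrable (fun ω =>
        c ω * (jumpCount (fun s => Zm s ω) (fun s => Z s ω) j k t : ℝ)) P :=
      fun k hk => hint_mul j k (Finset.ne_of_mem_erase hk).symm (hsup_exit k)
    have hpocc : pOcc P Hf Z j t
        = ∑ k ∈ Finset.univ.erase j,
            ∫ ω, c ω * (jumpCount (fun s => Zm s ω) (fun s => Z s ω) k j t : ℝ) ∂P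
          - ∑ k ∈ Finset.univ.erase j,
            ∫ ω, c ω * (jumpCount (fun s => Zm s ω) (fun s => Z s ω) j k t : ℝ) ∂P := by
      rw [pOcc, integral_congr_ae (Filter.Eventually.of_forall hptw),
        integral_sub (integrable_finset_sum _ hint_e) (integrable_finset_sum _ hint_x),
        integral_finset_sum _ hint_e, integral_finset_sum _ hint_x]
    have hpj_e : ∀ k ∈ Finset.univ.erase j, pJump P Hf Zm Z k j t
        = ∫ ω, c ω * (jumpCount (fun s => Zm s ω) (fun s => Z s ω) k j t : ℝ) ∂P := by
      intro k hk
      rw [pJump]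
      exact integral_congr_ae (Filter.Eventually.of_forall
        (fun ω => hjump_entry k (Finset.ne_of_mem_erase hk) ω))
    have hpj_x : ∀ k ∈ Finset.univ.erase j, pJump P Hf Zm Z j k t
        = ∫ ω, c ω * (jumpCount (fun s => Zm s ω) (fun s => Z s ω) j k t : ℝ) ∂P := by
      intro k hk
      rw [pJump]
      exact integral_congr_ae (Filter.Eventually.of_forall
        (fun ω => hjump_exit k (Finset.ne_of_mem_erase hk).symm ω))
    have hsum2 : ∑ k ∈ J0ᶜ.erase j, pJump P Hf Zm Z j k t
        = ∑ k ∈ Finset.univ.erase j, pJump P Hf Zm Z j k t := by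
      apply Finset.sum_subset
      · intro k hk
        exact Finset.mem_erase.mpr ⟨Finset.ne_of_mem_erase hk, Finset.mem_univ _⟩
      · intro k hk hknot
        have hkj : k ≠ j := Finset.ne_of_mem_erase hk
        have hkJ0 : k ∈ J0 := by
          by_contra h'
          exact hknot (Finset.mem_erase.mpr ⟨hkj, Finset.mem_compl.mpr h'⟩)
        rw [pJump]
        have hz : ∀ ω, jumpInt (fun s => Hf s ω)
            (fun s => Zm s ω) (fun s => Z s ω) j k t = 0 := by
          intro ω
          have hset : {s : ℝ | s ∈ Set.Ioc 0 t ∧ Zm s ω = j ∧ Z s ω = k} = ∅ := by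
            ext s
            simp only [Set.mem_setOf_eq, Set.mem_empty_iff_false, iff_false]
            rintro ⟨hs, hzm, hzs⟩
            exact hE ω s hs.1 (by rw [hzm]; exact hjJ0) (by rw [hzs]; exact hkJ0)
          rw [jumpInt, hset, finsum_mem_empty]
        rw [integral_congr_ae (Filter.Eventually.of_forall hz), integral_zero]
    rw [hpocc, hsum2,
      Finset.sum_congr rfl hpj_e, Finset.sum_congr rfl hpj_x]
end

section
/- (Deterministic stability of the ε-perturbed integral functional; workhorse of the consistency proofs.) Let θ > 0, ε > 0, V ≥ 0. Let f_n, f : [0,θ] → [0,∞) be nondecreasing right-continuous functions with f_n(0) = f(0) = 0 and sup_{t ∈ [0,θ]} |f_n(t) − f(t)| → 0. Let g_n, g : [0,θ] → [0,∞) be right-continuous functions with left limits whose total variations on [0,θ] are all bounded by V, and with sup_{t ∈ [0,θ]} |g_n(t) − g(t)| → 0. Then sup_{t ∈ [0,θ]} | ∫_{(0,t]} (g_n(s−) ∨ ε)^{−1} df_n(s) − ∫_{(0,t]} (g(s−) ∨ ε)^{−1} df(s) | → 0 as n → ∞, where the integrals are Lebesgue–Stieltjes integrals with respect to the measures induced by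 f_n and f, and g(s−) denotes the left limit at s. -/
/-!
Put `φ x = (max x ε)⁻¹`, which is `(ε ^ 2)⁻¹`-Lipschitz, and split the difference of the integrals
at `∫ φ(g(s−)) dfₙ`. Replacing `gₙ` by `g` in the integrand costs at most
`(ε ^ 2)⁻¹ ‖gₙ - g‖∞ (fₙ t - fₙ 0)`. To replace `fₙ` by `f`, write `φ ∘ g`, which has bounded
variation, as `P - Q` with `P`, `Q` monotone and nonnegative. Fubini on the triangle
`{0 < y < x ≤ t}` gives the integration by parts
`∫_{(0,t]} P(x−) dF(x) = P(0+) (F t - F 0) + ∫_{(0,t]} (F t - F y) dP(y)`,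
and the right-hand side is `2 P(θ+)`-Lipschitz in `F` for the sup norm on `[0, θ]`.
-/

open Set Filter MeasureTheory Topology Function
open scoped ENNReal NNReal

lemma abs_inv_max_sub_inv_max_le {ε : ℝ} (hε : 0 < ε) (x y : ℝ) :
    |(max x ε)⁻¹ - (max y ε)⁻¹| ≤ (ε ^ 2)⁻¹ * |x - y| := by
  have hx : ε ≤ max x ε := le_max_right _ _
  have hy : ε ≤ max y ε := le_max_right _ _
  have hx0 : 0 < max x ε := hε.trans_le hx
  have hy0 : 0 < max y ε := hε.trans_le hy
  rw [inv_sub_inv hx0.ne' hy0.ne', abs_div, abs_of_pos (mul_pos hx0 hy0), div_eq_inv_mul,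
    abs_sub_comm, sq]
  exact mul_le_mul (inv_anti₀ (by positivity) (mul_le_mul hx hy hε.le hx0.le))
    (abs_max_sub_max_le_abs _ _ _) (abs_nonneg _) (by positivity)

lemma lipschitzWith_inv_max {ε : ℝ} (hε : 0 < ε) :
    LipschitzWith (ε ^ 2)⁻¹.toNNReal fun x : ℝ => (max x ε)⁻¹ :=
  .of_dist_le' fun x y => abs_inv_max_sub_inv_max_le hε x y

lemma Monotone.integrableOn_Ioc {f : ℝ → ℝ} (hf : Monotone f) {μ : Measure ℝ}
    [IsLocallyFiniteMeasure μ] {a b : ℝ} : IntegrableOn f (Ioc a b) μ :=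
  (hf.locallyIntegrable.integrableOn_isCompact isCompact_Icc).mono_set Ioc_subset_Icc_self

lemma StieltjesFunction.measureReal_Ioc (F : StieltjesFunction ℝ) {a b : ℝ} (hab : a ≤ b) :
    F.measure.real (Ioc a b) = F b - F a := by
  rw [measureReal_def, F.measure_Ioc, ENNReal.toReal_ofReal (sub_nonneg.2 (F.mono hab))]

lemma BoundedVariationOn.tendsto_leftLim_of_mem_Ioc {E : Type*} [PseudoEMetricSpace E]
    [CompleteSpace E] {f : ℝ → E} {a b x : ℝ} (hf : BoundedVariationOn f (Icc a b))
    (hx : x ∈ Ioc a b) : Tendsto f (𝓝[<] x) (𝓝 (Function.leftLim f x)) := by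
  obtain ⟨l, hl⟩ := hf.exists_tendsto_left x
  rw [show Icc a b ∩ Iio x = Ico a x by grind, nhdsWithin_Ico_eq_nhdsLT hx.1] at hl
  exact tendsto_leftLim_of_tendsto ⟨l, hl⟩

lemma BoundedVariationOn.exists_monotone_nonneg_sub {f : ℝ → ℝ} {a b : ℝ} (hab : a ≤ b)
    (hf : BoundedVariationOn f (Icc a b)) :
    ∃ P Q : ℝ → ℝ, Monotone P ∧ Monotone Q ∧ 0 ≤ P ∧ 0 ≤ Q ∧ EqOn f (P - Q) (Icc a b) := by
  obtain ⟨p, q, hp, hq, rfl⟩ := hf.locallyBoundedVariationOn.exists_monotoneOn_sub_monotoneOn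
  have hmono {r : ℝ → ℝ} (hr : MonotoneOn r (Icc a b)) :
      Monotone fun x => r (projIcc a b hab x) + (|p a| + |q a|) := fun x y hxy =>
    add_le_add_left (hr (projIcc a b hab x).2 (projIcc a b hab y).2 (monotone_projIcc hab hxy)) _
  refine ⟨_, _, hmono hp, hmono hq, fun x => ?_, fun x => ?_, fun x hx => ?_⟩
  · have := hp (left_mem_Icc.2 hab) (projIcc a b hab x).2 (projIcc a b hab x).2.1
    simp only [Pi.zero_apply]
    linarith [neg_abs_le (p a), abs_nonneg (q a)]
  · have := hq (left_mem_Icc.2 hab) (projIcc a b hab x).2 (projIcc a b hab x).2.1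
    simp only [Pi.zero_apply]
    linarith [neg_abs_le (q a), abs_nonneg (p a)]
  · simp [projIcc_of_mem hab hx]

lemma BoundedVariationOn.exists_comp_leftLim_eq_leftLim_sub {φ : ℝ → ℝ} {K : ℝ≥0}
    (hφ : LipschitzWith K φ) {w : ℝ → ℝ} {a b : ℝ} (hab : a ≤ b)
    (hw : BoundedVariationOn w (Icc a b)) :
    ∃ P Q : ℝ → ℝ, Monotone P ∧ Monotone Q ∧ 0 ≤ P ∧ 0 ≤ Q ∧
      EqOn (fun s => φ (Function.leftLim w s)) (Function.leftLim P - Function.leftLim Q)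
        (Ioc a b) := by
  obtain ⟨P, Q, hP, hQ, hP0, hQ0, hPQ⟩ :=
    (hφ.lipschitzOnWith.comp_boundedVariationOn (mapsTo_univ _ _) hw).exists_monotone_nonneg_sub
      hab
  refine ⟨P, Q, hP, hQ, hP0, hQ0, fun s hs => tendsto_nhds_unique
    ((hφ.continuous.tendsto _).comp (hw.tendsto_leftLim_of_mem_Ioc hs)) ?_⟩
  refine ((hP.tendsto_leftLim s).sub (hQ.tendsto_leftLim s)).congr' ?_
  filter_upwards [Ioo_mem_nhdsLT hs.1] with x hx
  exact (hPQ ⟨hx.1.le, hx.2.le.trans hs.2⟩).symm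

lemma BoundedVariationOn.integrableOn_comp_leftLim {φ : ℝ → ℝ} {K : ℝ≥0}
    (hφ : LipschitzWith K φ) {w : ℝ → ℝ} {a b : ℝ} (hab : a ≤ b)
    (hw : BoundedVariationOn w (Icc a b)) (μ : Measure ℝ) [IsLocallyFiniteMeasure μ] :
    IntegrableOn (fun s => φ (Function.leftLim w s)) (Ioc a b) μ := by
  obtain ⟨P, Q, hP, hQ, -, -, hPQ⟩ := hw.exists_comp_leftLim_eq_leftLim_sub hφ hab
  exact (hP.leftLim.integrableOn_Ioc.sub hQ.leftLim.integrableOn_Ioc).congr_fun hPQ.symm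
    measurableSet_Ioc

lemma BoundedVariationOn.abs_sub_le_iSup {α : Type*} [LinearOrder α] {u v : α → ℝ} {s : Set α}
    (hu : BoundedVariationOn u s) (hv : BoundedVariationOn v s) {x : α} (hx : x ∈ s) :
    |u x - v x| ≤ ⨆ y : s, |u y - v y| := by
  refine le_ciSup (f := fun y : s => |u y - v y|)
    ⟨|u x - v x| + (eVariationOn u s).toReal + (eVariationOn v s).toReal, ?_⟩ ⟨x, hx⟩
  rintro _ ⟨y, rfl⟩
  have hu' := hu.dist_le y.2 hx
  have hv' := hv.dist_le hx y.2
  rw [Real.dist_eq] at hu' hv'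
  linarith [abs_sub_le (u y) (u x) (v y), abs_sub_le (u x) (v x) (v y)]

/-- Both sides are the `μ.prod ν`-measure of the triangle `{(x, y) | a < y < x ≤ b}`. -/
lemma lintegral_measure_Ioo_eq_lintegral_measure_Ioc (μ ν : Measure ℝ) [SFinite μ] [SFinite ν]
    (a b : ℝ) : ∫⁻ x in Ioc a b, ν (Ioo a x) ∂μ = ∫⁻ y in Ioc a b, μ (Ioc y b) ∂ν := by
  have hswap := lintegral_lintegral_swap (μ := μ.restrict (Ioc a b)) (ν := ν.restrict (Ioc a b))
    (f := fun x y => (Iio x).indicator 1 y)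
    (measurable_one.indicator (measurableSet_lt measurable_snd measurable_fst)).aemeasurable
  have hleft : ∀ x ∈ Ioc a b, ∫⁻ y in Ioc a b, (Iio x).indicator 1 y ∂ν = ν (Ioo a x) := by
    intro x hx
    rw [lintegral_indicator_one measurableSet_Iio, Measure.restrict_apply measurableSet_Iio]
    congr 1
    grind
  have hright : ∀ y ∈ Ioc a b, ∫⁻ x in Ioc a b, (Iio x).indicator 1 y ∂μ = μ (Ioc y b) := by
    intro y hy
    have : (fun x => (Iio x).indicator (1 : ℝ → ℝ≥0∞) y) = (Ioi y).indicator 1 := by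
      ext x
      simp [indicator_apply]
    rw [this, lintegral_indicator_one measurableSet_Ioi, Measure.restrict_apply measurableSet_Ioi]
    congr 1
    grind
  rw [← setLIntegral_congr_fun measurableSet_Ioc hleft, hswap,
    setLIntegral_congr_fun measurableSet_Ioc hright]

theorem StieltjesFunction.setIntegral_leftLim_sub_eq (F : StieltjesFunction ℝ) {M : ℝ → ℝ}
    (hM : Monotone M) (a b : ℝ) :
    ∫ x in Ioc a b, (leftLim M x - rightLim M a) ∂F.measure
      = ∫ y in Ioc a b, (F b - F y) ∂hM.stieltjesFunction.measure := by
  have hleft : ∀ x ∈ Ioc a b,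
      ENNReal.ofReal (leftLim M x - rightLim M a) = hM.stieltjesFunction.measure (Ioo a x) := by
    intro x _
    have hN : (hM.stieltjesFunction : ℝ → ℝ) = rightLim M := rfl
    rw [StieltjesFunction.measure_Ioo, hN, leftLim_rightLim (hM.tendsto_leftLim x)]
  have hright : ∀ y ∈ Ioc a b, ENNReal.ofReal (F b - F y) = F.measure (Ioc y b) :=
    fun y _ => (F.measure_Ioc y b).symm
  rw [integral_eq_lintegral_of_nonneg_ae, integral_eq_lintegral_of_nonneg_ae,
    setLIntegral_congr_fun measurableSet_Ioc hleft,
    setLIntegral_congr_fun measurableSet_Ioc hright,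
    lintegral_measure_Ioo_eq_lintegral_measure_Ioc]
  · exact ae_restrict_of_forall_mem measurableSet_Ioc fun y hy => sub_nonneg.2 (F.mono hy.2)
  · exact (measurable_const.sub F.mono.measurable).aestronglyMeasurable
  · exact ae_restrict_of_forall_mem measurableSet_Ioc fun x hx =>
      sub_nonneg.2 (hM.rightLim_le_leftLim hx.1)
  · exact (hM.leftLim.measurable.sub_const _).aestronglyMeasurable

lemma StieltjesFunction.setIntegral_leftLim_eq (F : StieltjesFunction ℝ) {M : ℝ → ℝ}
    (hM : Monotone M) {a b : ℝ} (hab : a ≤ b) :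
    ∫ x in Ioc a b, leftLim M x ∂F.measure
      = rightLim M a * (F b - F a) + ∫ y in Ioc a b, (F b - F y) ∂hM.stieltjesFunction.measure := by
  rw [← F.setIntegral_leftLim_sub_eq hM, integral_sub hM.leftLim.integrableOn_Ioc
    (integrableOn_const measure_Ioc_lt_top.ne), setIntegral_const, F.measureReal_Ioc hab,
    smul_eq_mul]
  ring

/-- After integrating by parts, `F₁ - F₂` enters only through values bounded by `D`, against the
total mass `rightLim M a + (rightLim M b - rightLim M a)`. -/
lemma StieltjesFunction.abs_setIntegral_leftLim_sub_le {M : ℝ → ℝ} (hM : Monotone M)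
    (hM0 : 0 ≤ M) {F₁ F₂ : StieltjesFunction ℝ} {a b D : ℝ} (hab : a ≤ b)
    (hD : ∀ x ∈ Icc a b, |F₁ x - F₂ x| ≤ D) :
    |∫ x in Ioc a b, leftLim M x ∂F₁.measure - ∫ x in Ioc a b, leftLim M x ∂F₂.measure|
      ≤ 2 * D * rightLim M b := by
  have hc : 0 ≤ rightLim M a := (hM0 a).trans (hM.le_rightLim le_rfl)
  have hb := hD b (right_mem_Icc.2 hab)
  have hparts : |∫ y in Ioc a b, (F₁ b - F₁ y) ∂hM.stieltjesFunction.measure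
      - ∫ y in Ioc a b, (F₂ b - F₂ y) ∂hM.stieltjesFunction.measure|
      ≤ 2 * D * (rightLim M b - rightLim M a) := by
    have hint (F : StieltjesFunction ℝ) :
        IntegrableOn (fun y => F b - F y) (Ioc a b) hM.stieltjesFunction.measure :=
      IntegrableOn.sub (integrableOn_const measure_Ioc_lt_top.ne) F.mono.integrableOn_Ioc
    rw [← integral_sub (hint F₁) (hint F₂), ← hM.stieltjesFunction_eq, ← hM.stieltjesFunction_eq,
      ← StieltjesFunction.measureReal_Ioc _ hab, ← Real.norm_eq_abs]
    refine norm_setIntegral_le_of_norm_le_const measure_Ioc_lt_top fun y hy => ?_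
    have hy' := hD y (Ioc_subset_Icc_self hy)
    rw [Real.norm_eq_abs, show F₁ b - F₁ y - (F₂ b - F₂ y) = (F₁ b - F₂ b) - (F₁ y - F₂ y) by ring]
    linarith [abs_sub (F₁ b - F₂ b) (F₁ y - F₂ y)]
  have hboundary : |rightLim M a * ((F₁ b - F₁ a) - (F₂ b - F₂ a))| ≤ rightLim M a * (2 * D) := by
    have ha := hD a (left_mem_Icc.2 hab)
    rw [abs_mul, abs_of_nonneg hc,
      show F₁ b - F₁ a - (F₂ b - F₂ a) = (F₁ b - F₂ b) - (F₁ a - F₂ a) by ring]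
    gcongr
    linarith [abs_sub (F₁ b - F₂ b) (F₁ a - F₂ a)]
  rw [F₁.setIntegral_leftLim_eq hM hab, F₂.setIntegral_leftLim_eq hM hab]
  have htriangle := abs_add_le (rightLim M a * ((F₁ b - F₁ a) - (F₂ b - F₂ a)))
    (∫ y in Ioc a b, (F₁ b - F₁ y) ∂hM.stieltjesFunction.measure
      - ∫ y in Ioc a b, (F₂ b - F₂ y) ∂hM.stieltjesFunction.measure)
  rw [← sub_add_sub_comm, ← mul_sub]
  linarith

lemma StieltjesFunction.abs_setIntegral_leftLim_sub_leftLim_sub_le {P Q : ℝ → ℝ}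
    (hP : Monotone P) (hQ : Monotone Q) (hP0 : 0 ≤ P) (hQ0 : 0 ≤ Q) {F₁ F₂ : StieltjesFunction ℝ}
    {a b D : ℝ} (hab : a ≤ b) (hD : ∀ x ∈ Icc a b, |F₁ x - F₂ x| ≤ D) :
    |∫ x in Ioc a b, (leftLim P - leftLim Q) x ∂F₁.measure
      - ∫ x in Ioc a b, (leftLim P - leftLim Q) x ∂F₂.measure|
      ≤ 2 * D * (rightLim P b + rightLim Q b) := by
  simp only [Pi.sub_apply]
  rw [integral_sub hP.leftLim.integrableOn_Ioc hQ.leftLim.integrableOn_Ioc,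
    integral_sub hP.leftLim.integrableOn_Ioc hQ.leftLim.integrableOn_Ioc, sub_sub_sub_comm]
  have hPest := abs_setIntegral_leftLim_sub_le hP hP0 hab hD
  have hQest := abs_setIntegral_leftLim_sub_le hQ hQ0 hab hD
  linarith [abs_sub
    (∫ x in Ioc a b, leftLim P x ∂F₁.measure - ∫ x in Ioc a b, leftLim P x ∂F₂.measure)
    (∫ x in Ioc a b, leftLim Q x ∂F₁.measure - ∫ x in Ioc a b, leftLim Q x ∂F₂.measure)]

lemma abs_setIntegral_comp_leftLim_sub_comp_leftLim_le {φ : ℝ → ℝ} {K : ℝ≥0}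
    (hφ : LipschitzWith K φ) {w₁ w₂ : ℝ → ℝ} {a b δ : ℝ} (hab : a ≤ b)
    (hw₁ : BoundedVariationOn w₁ (Icc a b)) (hw₂ : BoundedVariationOn w₂ (Icc a b))
    (hδ : ∀ x ∈ Icc a b, |w₁ x - w₂ x| ≤ δ) (μ : Measure ℝ) [IsLocallyFiniteMeasure μ] :
    |∫ s in Ioc a b, φ (leftLim w₁ s) ∂μ - ∫ s in Ioc a b, φ (leftLim w₂ s) ∂μ|
      ≤ K * δ * μ.real (Ioc a b) := by
  rw [← integral_sub (hw₁.integrableOn_comp_leftLim hφ hab μ)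
    (hw₂.integrableOn_comp_leftLim hφ hab μ), ← Real.norm_eq_abs]
  refine norm_setIntegral_le_of_norm_le_const measure_Ioc_lt_top fun s hs => ?_
  have hleftLim : |leftLim w₁ s - leftLim w₂ s| ≤ δ := by
    refine le_of_tendsto ((hw₁.tendsto_leftLim_of_mem_Ioc hs).sub
      (hw₂.tendsto_leftLim_of_mem_Ioc hs)).abs ?_
    filter_upwards [Ioo_mem_nhdsLT hs.1] with x hx
    exact hδ x ⟨hx.1.le, hx.2.le.trans hs.2⟩
  calc ‖φ (leftLim w₁ s) - φ (leftLim w₂ s)‖ ≤ K * |leftLim w₁ s - leftLim w₂ s| := by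
        simpa only [Real.dist_eq, Real.norm_eq_abs] using
          hφ.dist_le_mul (leftLim w₁ s) (leftLim w₂ s)
    _ ≤ K * δ := by gcongr

theorem StieltjesFunction.abs_setIntegral_comp_leftLim_sub_le {φ : ℝ → ℝ} {K : ℝ≥0}
    (hφ : LipschitzWith K φ) {w₁ w₂ P Q : ℝ → ℝ} {a b t D δ : ℝ} (ht : t ∈ Icc a b)
    (hw₁ : BoundedVariationOn w₁ (Icc a b)) (hw₂ : BoundedVariationOn w₂ (Icc a b))
    (hP : Monotone P) (hQ : Monotone Q) (hP0 : 0 ≤ P) (hQ0 : 0 ≤ Q)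
    (hPQ : EqOn (fun s => φ (leftLim w₂ s)) (leftLim P - leftLim Q) (Ioc a b))
    {F₁ F₂ : StieltjesFunction ℝ} (hD : ∀ x ∈ Icc a b, |F₁ x - F₂ x| ≤ D)
    (hδ : ∀ x ∈ Icc a b, |w₁ x - w₂ x| ≤ δ) :
    |∫ s in Ioc a t, φ (leftLim w₁ s) ∂F₁.measure - ∫ s in Ioc a t, φ (leftLim w₂ s) ∂F₂.measure|
      ≤ K * δ * (F₂ b - F₂ a + 2 * D) + 2 * D * (rightLim P b + rightLim Q b) := by
  have hab : a ≤ b := ht.1.trans ht.2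
  have hsub : Icc a t ⊆ Icc a b := Icc_subset_Icc_right ht.2
  have hrepr (F : StieltjesFunction ℝ) : ∫ s in Ioc a t, φ (leftLim w₂ s) ∂F.measure
      = ∫ s in Ioc a t, (leftLim P - leftLim Q) s ∂F.measure :=
    setIntegral_congr_fun measurableSet_Ioc (hPQ.mono (Ioc_subset_Ioc_right ht.2))
  have hperturb := abs_setIntegral_comp_leftLim_sub_comp_leftLim_le hφ ht.1 (hw₁.mono hsub)
    (hw₂.mono hsub) (fun x hx => hδ x (hsub hx)) F₁.measure
  have hmeasure := abs_setIntegral_leftLim_sub_leftLim_sub_le hP hQ hP0 hQ0 ht.1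
    (fun x hx => hD x (hsub hx))
  rw [hrepr, F₁.measureReal_Ioc ht.1] at hperturb
  rw [hrepr]
  have ha := hD a (left_mem_Icc.2 hab)
  have hb := hD b (right_mem_Icc.2 hab)
  have hδ0 : 0 ≤ δ := (abs_nonneg _).trans (hδ a (left_mem_Icc.2 hab))
  have hF₁ : F₁ t - F₁ a ≤ F₂ b - F₂ a + 2 * D := by
    linarith [F₁.mono ht.2, le_abs_self (F₁ b - F₂ b), neg_abs_le (F₁ a - F₂ a)]
  calc _ ≤ _ := abs_sub_le _ (∫ s in Ioc a t, (leftLim P - leftLim Q) s ∂F₁.measure) _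
    _ ≤ K * δ * (F₁ t - F₁ a) + 2 * D * (rightLim P t + rightLim Q t) :=
      add_le_add hperturb hmeasure
    _ ≤ _ := add_le_add (mul_le_mul_of_nonneg_left hF₁ (mul_nonneg K.2 hδ0))
      (mul_le_mul_of_nonneg_left (add_le_add (hP.rightLim ht.2) (hQ.rightLim ht.2))
        (by linarith [abs_nonneg (F₁ a - F₂ a)]))

theorem eps_perturbed_integral_stability_general
    (θ ε V : ℝ) (hθ : 0 < θ) (hε : 0 < ε)
    (fn : ℕ → StieltjesFunction ℝ) (f : StieltjesFunction ℝ)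
    (hfconv : Tendsto (fun n => ⨆ t : Set.Icc (0:ℝ) θ, |fn n ↑t - f ↑t|) atTop (𝓝 0))
    (gn : ℕ → ℝ → ℝ) (g : ℝ → ℝ)
    (hgnV : ∀ n, eVariationOn (gn n) (Set.Icc (0:ℝ) θ) ≤ ENNReal.ofReal V)
    (hgV : eVariationOn g (Set.Icc (0:ℝ) θ) ≤ ENNReal.ofReal V)
    (hgconv : Tendsto (fun n => ⨆ t : Set.Icc (0:ℝ) θ, |gn n ↑t - g ↑t|) atTop (𝓝 0)) :
    Tendsto
      (fun n => ⨆ t : Set.Icc (0:ℝ) θ,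
        |(∫ s in Set.Ioc (0:ℝ) (↑t : ℝ), (max (Function.leftLim (gn n) s) ε)⁻¹
            ∂(fn n).measure)
          - ∫ s in Set.Ioc (0:ℝ) (↑t : ℝ), (max (Function.leftLim g s) ε)⁻¹ ∂f.measure|)
      atTop (𝓝 0) := by
  have hθ0 : (0:ℝ) ≤ θ := hθ.le
  have hgbv : BoundedVariationOn g (Icc 0 θ) := ne_top_of_le_ne_top ENNReal.ofReal_ne_top hgV
  have hgnbv (n : ℕ) : BoundedVariationOn (gn n) (Icc 0 θ) :=
    ne_top_of_le_ne_top ENNReal.ofReal_ne_top (hgnV n)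
  have hFbv (F : StieltjesFunction ℝ) : BoundedVariationOn F (Icc 0 θ) := by
    simpa using (F.mono.monotoneOn (Icc 0 θ)).locallyBoundedVariationOn 0 θ
      (left_mem_Icc.2 hθ0) (right_mem_Icc.2 hθ0)
  obtain ⟨P, Q, hP, hQ, hP0, hQ0, hPQ⟩ :=
    hgbv.exists_comp_leftLim_eq_leftLim_sub (lipschitzWith_inv_max hε) hθ0
  have hest (n : ℕ) (t : Icc (0:ℝ) θ) := StieltjesFunction.abs_setIntegral_comp_leftLim_sub_le
    (lipschitzWith_inv_max hε) t.2 (hgnbv n) hgbv hP hQ hP0 hQ0 hPQ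
    (fun x hx => (hFbv (fn n)).abs_sub_le_iSup (hFbv f) hx)
    (fun x hx => (hgnbv n).abs_sub_le_iSup hgbv hx)
  refine squeeze_zero (fun n => Real.iSup_nonneg fun _ => abs_nonneg _)
    (fun n => Real.iSup_le (hest n) ((abs_nonneg _).trans (hest n ⟨0, left_mem_Icc.2 hθ0⟩))) ?_
  simpa using ((tendsto_const_nhds.mul hgconv).mul
    (tendsto_const_nhds.add (tendsto_const_nhds.mul hfconv))).add
    ((tendsto_const_nhds.mul hfconv).mul tendsto_const_nhds)

/-- deterministic stability of the ε-perturbed integral functional: if the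
nondecreasing right-continuous functions `fn n` (with `fn n 0 = f 0 = 0`, values in `[0,∞)`
on `[0,θ]`) converge uniformly on `[0,θ]` to `f`, and the nonnegative regulated functions
`gn n` (right-continuous with left limits on `[0,θ]`, total variation at most `V`) converge
uniformly on `[0,θ]` to `g`, then
`sup_{t ∈ [0,θ]} |∫_{(0,t]} (gn n(s−) ∨ ε)⁻¹ dfn n(s) − ∫_{(0,t]} (g(s−) ∨ ε)⁻¹ df(s)| → 0`. -/
theorem eps_perturbed_integral_stability
    (θ ε V : ℝ) (hθ : 0 < θ) (hε : 0 < ε) (hV : 0 ≤ V)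
    (fn : ℕ → StieltjesFunction ℝ) (f : StieltjesFunction ℝ)
    (hfn0 : ∀ n, fn n 0 = 0) (hf0 : f 0 = 0)
    (hfnn : ∀ n, ∀ t ∈ Set.Icc (0:ℝ) θ, 0 ≤ fn n t)
    (hfnng : ∀ t ∈ Set.Icc (0:ℝ) θ, 0 ≤ f t)
    (hfconv : Tendsto (fun n => ⨆ t : Set.Icc (0:ℝ) θ, |fn n ↑t - f ↑t|) atTop (𝓝 0))
    (gn : ℕ → ℝ → ℝ) (g : ℝ → ℝ)
    (hgnn : ∀ n, ∀ t ∈ Set.Icc (0:ℝ) θ, 0 ≤ gn n t)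
    (hgn0 : ∀ t ∈ Set.Icc (0:ℝ) θ, 0 ≤ g t)
    (hgnrc : ∀ n, ∀ s ∈ Set.Ico (0:ℝ) θ, ContinuousWithinAt (gn n) (Set.Ici s) s)
    (hgrc : ∀ s ∈ Set.Ico (0:ℝ) θ, ContinuousWithinAt g (Set.Ici s) s)
    (hgnll : ∀ n, ∀ s ∈ Set.Ioc (0:ℝ) θ,
      Tendsto (gn n) (𝓝[<] s) (𝓝 (Function.leftLim (gn n) s)))
    (hgll : ∀ s ∈ Set.Ioc (0:ℝ) θ,
      Tendsto g (𝓝[<] s) (𝓝 (Function.leftLim g s)))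
    (hgnV : ∀ n, eVariationOn (gn n) (Set.Icc (0:ℝ) θ) ≤ ENNReal.ofReal V)
    (hgV : eVariationOn g (Set.Icc (0:ℝ) θ) ≤ ENNReal.ofReal V)
    (hgconv : Tendsto (fun n => ⨆ t : Set.Icc (0:ℝ) θ, |gn n ↑t - g ↑t|) atTop (𝓝 0)) :
    Tendsto
      (fun n => ⨆ t : Set.Icc (0:ℝ) θ,
        |(∫ s in Set.Ioc (0:ℝ) (↑t : ℝ), (max (Function.leftLim (gn n) s) ε)⁻¹
            ∂(fn n).measure)
          - ∫ s in Set.Ioc (0:ℝ) (↑t : ℝ), (max (Function.leftLim g s) ε)⁻¹ ∂f.measure|)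
      atTop (𝓝 0) :=
  eps_perturbed_integral_stability_general θ ε V hθ hε fn f hfconv gn g hgnV hgV hgconv
end

section
/- (Uniqueness of solutions to forward Stieltjes–Volterra integral equations; used in Propositions 3.1 and 6.1.) Let J be a finite index set, T > 0, c ∈ ℝ^J, and for each pair (k, j) ∈ J × J let μ⁺_{kj} and μ⁻_{kj} be finite Borel measures on (0, T]. Suppose f, g : [0,T] → ℝ^J are bounded, right-continuous with left limits, and both satisfy, for every j ∈ J and every t ∈ [0,T], f_j(t) = c_j + Σ_{k ∈ J} ( ∫_{(0,t]} f_k(s−) μ⁺_{kj}(ds) − ∫_{(0,t]} f_k(s−) μ⁻_{kj}(ds) ) (and likewise for g with the same c and the same measures). Then f = g on [0,T]. -/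
open Set Filter MeasureTheory Topology

lemma absLimLe {φ : ℝ → ℝ} {s l C : ℝ} (hs : 0 < s)
    (h : Tendsto φ (𝓝[<] s) (𝓝 l)) (hb : ∀ u ∈ Set.Ioo (0:ℝ) s, |φ u| ≤ C) : |l| ≤ C := by
  have habs : Tendsto (fun u => |φ u|) (𝓝[<] s) (𝓝 |l|) := h.abs
  refine le_of_tendsto habs ?_
  filter_upwards [Ioo_mem_nhdsLT_of_mem (Set.mem_Ioc.mpr ⟨hs, le_refl s⟩)] with u hu
  exact hb u hu

lemma leftLimIntegrable {φ : ℝ → ℝ} {T C : ℝ}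
    (hb : ∀ t ∈ Set.Icc (0:ℝ) T, |φ t| ≤ C)
    (hll : ∀ s ∈ Set.Ioc (0:ℝ) T, Tendsto φ (𝓝[<] s) (𝓝 (Function.leftLim φ s)))
    (μ : Measure ℝ) [IsFiniteMeasure μ] (hμ : μ (Set.Ioc (0:ℝ) T)ᶜ = 0)
    (t : ℝ) : IntegrableOn (Function.leftLim φ) (Set.Ioc 0 t) μ := by
  have hae : ∀ᵐ s ∂(μ.restrict (Set.Ioc (0:ℝ) t)), s ∈ Set.Ioc (0:ℝ) T := by
    rw [ae_iff]
    refine le_antisymm (le_trans (Measure.restrict_apply_le _ _) ?_) zero_le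
    rw [← hμ]
    exact measure_mono (fun x hx => hx)
  have hLb : ∀ s ∈ Set.Ioc (0:ℝ) T, |Function.leftLim φ s| ≤ C := by
    intro s hs
    refine absLimLe hs.1 (hll s hs) ?_
    intro u hu
    exact hb u ⟨hu.1.le, hu.2.le.trans hs.2⟩
  have hGm : ∀ n : ℕ, Measurable (fun s : ℝ => φ (((⌈((n:ℝ)+1) * s⌉ : ℤ) - 1) / ((n:ℝ)+1))) := by
    intro n
    have h1 : Measurable fun s : ℝ => (⌈((n:ℝ)+1) * s⌉ : ℤ) :=
      Int.measurable_ceil.comp (measurable_id.const_mul _)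
    exact (measurable_from_top (f := fun z : ℤ => φ (((z:ℝ) - 1) / ((n:ℝ)+1)))).comp h1
  have hconv : ∀ s ∈ Set.Ioc (0:ℝ) T,
      Tendsto (fun n : ℕ => φ (((⌈((n:ℝ)+1) * s⌉ : ℤ) - 1) / ((n:ℝ)+1))) atTop
        (𝓝 (Function.leftLim φ s)) := by
    intro s hs
    set u : ℕ → ℝ := fun n => (((⌈((n:ℝ)+1) * s⌉ : ℤ) : ℝ) - 1) / ((n:ℝ)+1) with hudef
    have hpos : ∀ n : ℕ, (0:ℝ) < (n:ℝ)+1 := fun n => by positivity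
    have hlt : ∀ n : ℕ, u n < s := by
      intro n
      rw [hudef, div_lt_iff₀ (hpos n)]
      have h1 := Int.ceil_lt_add_one (((n:ℝ)+1) * s)
      have h2 : ((n:ℝ)+1) * s = s * ((n:ℝ)+1) := mul_comm _ _
      linarith
    have hge : ∀ n : ℕ, s - 1/((n:ℝ)+1) ≤ u n := by
      intro n
      rw [hudef, le_div_iff₀ (hpos n)]
      have h1 := Int.le_ceil (((n:ℝ)+1) * s)
      have h2 : ((n:ℝ)+1) * s = s * ((n:ℝ)+1) := mul_comm _ _
      have h3 : (s - 1/((n:ℝ)+1)) * ((n:ℝ)+1) = s * ((n:ℝ)+1) - 1 := by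
        field_simp
      linarith
    have hlow : Tendsto (fun n : ℕ => s - 1/((n:ℝ)+1)) atTop (𝓝 s) := by
      have h1 := tendsto_one_div_add_atTop_nhds_zero_nat (𝕜 := ℝ)
      have h2 := Tendsto.sub (tendsto_const_nhds : Tendsto (fun _ : ℕ => s) atTop (𝓝 s)) h1
      simpa using h2
    have htends : Tendsto u atTop (𝓝 s) :=
      tendsto_of_tendsto_of_tendsto_of_le_of_le hlow tendsto_const_nhds hge (fun n => (hlt n).le)
    have htw : Tendsto u atTop (𝓝[<] s) :=
      tendsto_nhdsWithin_of_tendsto_nhds_of_eventually_within _ htends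
        (Eventually.of_forall hlt)
    exact (hll s hs).comp htw
  have haem : AEMeasurable (Function.leftLim φ) (μ.restrict (Set.Ioc (0:ℝ) t)) := by
    apply aemeasurable_of_tendsto_metrizable_ae' (fun n => (hGm n).aemeasurable)
    filter_upwards [hae] with s hs using hconv s hs
  refine ⟨haem.aestronglyMeasurable, HasFiniteIntegral.of_bounded (C := C) ?_⟩
  filter_upwards [hae] with s hs
  rw [Real.norm_eq_abs]
  exact hLb s hs

/-- uniqueness of solutions to forward Stieltjes–Volterra integral equations:
if `f` and `g` are bounded, right-continuous with left limits on `[0,T]`, and both satisfy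
`f_j(t) = c_j + ∑_k (∫_{(0,t]} f_k(s−) μ⁺_{kj}(ds) − ∫_{(0,t]} f_k(s−) μ⁻_{kj}(ds))`
with the same initial vector `c` and the same finite Borel measures `μ⁺_{kj}, μ⁻_{kj}`
on `(0,T]`, then `f = g` on `[0,T]`. -/
theorem volterra_forward_uniqueness
    {J : Type*} [Fintype J] (T : ℝ) (hT : 0 < T) (c : J → ℝ)
    (μp μm : J → J → Measure ℝ)
    (hμpfin : ∀ k j, IsFiniteMeasure (μp k j)) (hμmfin : ∀ k j, IsFiniteMeasure (μm k j))
    (hμp : ∀ k j, μp k j (Set.Ioc (0:ℝ) T)ᶜ = 0)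
    (hμm : ∀ k j, μm k j (Set.Ioc (0:ℝ) T)ᶜ = 0)
    (f g : J → ℝ → ℝ)
    (hfb : ∃ C, ∀ j, ∀ t ∈ Set.Icc (0:ℝ) T, |f j t| ≤ C)
    (hgb : ∃ C, ∀ j, ∀ t ∈ Set.Icc (0:ℝ) T, |g j t| ≤ C)
    (hfrc : ∀ j, ∀ s ∈ Set.Ico (0:ℝ) T, ContinuousWithinAt (f j) (Set.Ici s) s)
    (hgrc : ∀ j, ∀ s ∈ Set.Ico (0:ℝ) T, ContinuousWithinAt (g j) (Set.Ici s) s)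
    (hfll : ∀ j, ∀ s ∈ Set.Ioc (0:ℝ) T,
      Tendsto (f j) (𝓝[<] s) (𝓝 (Function.leftLim (f j) s)))
    (hgll : ∀ j, ∀ s ∈ Set.Ioc (0:ℝ) T,
      Tendsto (g j) (𝓝[<] s) (𝓝 (Function.leftLim (g j) s)))
    (hfeq : ∀ j, ∀ t ∈ Set.Icc (0:ℝ) T,
      f j t = c j + ∑ k : J,
        ((∫ s in Set.Ioc (0:ℝ) t, Function.leftLim (f k) s ∂(μp k j))
          - ∫ s in Set.Ioc (0:ℝ) t, Function.leftLim (f k) s ∂(μm k j)))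
    (hgeq : ∀ j, ∀ t ∈ Set.Icc (0:ℝ) T,
      g j t = c j + ∑ k : J,
        ((∫ s in Set.Ioc (0:ℝ) t, Function.leftLim (g k) s ∂(μp k j))
          - ∫ s in Set.Ioc (0:ℝ) t, Function.leftLim (g k) s ∂(μm k j))) :
    ∀ j, ∀ t ∈ Set.Icc (0:ℝ) T, f j t = g j t := by
  rcases isEmpty_or_nonempty J with hJ | hJ
  · intro j; exact (IsEmpty.false j).elim
  obtain ⟨C, hfC⟩ := hfb
  obtain ⟨C', hgC⟩ := hgb
  obtain ⟨j₀⟩ := hJ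
  set B : ℝ := C + C' with hBdef
  have hC0 : 0 ≤ C := le_trans (abs_nonneg _) (hfC j₀ 0 ⟨le_refl _, hT.le⟩)
  have hC'0 : 0 ≤ C' := le_trans (abs_nonneg _) (hgC j₀ 0 ⟨le_refl _, hT.le⟩)
  have hB0 : 0 ≤ B := add_nonneg hC0 hC'0
  -- integrability of the left limits
  have hIfp : ∀ k j (t : ℝ), IntegrableOn (Function.leftLim (f k)) (Set.Ioc 0 t) (μp k j) := by
    intro k j t
    haveI := hμpfin k j
    exact leftLimIntegrable (hfC k) (hfll k) (μp k j) (hμp k j) t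
  have hIfm : ∀ k j (t : ℝ), IntegrableOn (Function.leftLim (f k)) (Set.Ioc 0 t) (μm k j) := by
    intro k j t
    haveI := hμmfin k j
    exact leftLimIntegrable (hfC k) (hfll k) (μm k j) (hμm k j) t
  have hIgp : ∀ k j (t : ℝ), IntegrableOn (Function.leftLim (g k)) (Set.Ioc 0 t) (μp k j) := by
    intro k j t
    haveI := hμpfin k j
    exact leftLimIntegrable (hgC k) (hgll k) (μp k j) (hμp k j) t
  have hIgm : ∀ k j (t : ℝ), IntegrableOn (Function.leftLim (g k)) (Set.Ioc 0 t) (μm k j) := by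
    intro k j t
    haveI := hμmfin k j
    exact leftLimIntegrable (hgC k) (hgll k) (μm k j) (hμm k j) t
  have hISp : ∀ k j (t : ℝ), IntegrableOn
      (fun s => Function.leftLim (f k) s - Function.leftLim (g k) s) (Set.Ioc 0 t) (μp k j) :=
    fun k j t => (hIfp k j t).sub (hIgp k j t)
  have hISm : ∀ k j (t : ℝ), IntegrableOn
      (fun s => Function.leftLim (f k) s - Function.leftLim (g k) s) (Set.Ioc 0 t) (μm k j) :=
    fun k j t => (hIfm k j t).sub (hIgm k j t)
  -- the equation for the difference
  have hDeq : ∀ j, ∀ t ∈ Set.Icc (0:ℝ) T,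
      f j t - g j t = ∑ k : J,
        ((∫ s in Set.Ioc (0:ℝ) t,
            (Function.leftLim (f k) s - Function.leftLim (g k) s) ∂(μp k j))
          - ∫ s in Set.Ioc (0:ℝ) t,
            (Function.leftLim (f k) s - Function.leftLim (g k) s) ∂(μm k j)) := by
    intro j t ht
    have key : ∀ k : J,
        (∫ s in Set.Ioc (0:ℝ) t,
            (Function.leftLim (f k) s - Function.leftLim (g k) s) ∂(μp k j))
          - ∫ s in Set.Ioc (0:ℝ) t,
            (Function.leftLim (f k) s - Function.leftLim (g k) s) ∂(μm k j)
        = ((∫ s in Set.Ioc (0:ℝ) t, Function.leftLim (f k) s ∂(μp k j))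
            - ∫ s in Set.Ioc (0:ℝ) t, Function.leftLim (f k) s ∂(μm k j))
          - ((∫ s in Set.Ioc (0:ℝ) t, Function.leftLim (g k) s ∂(μp k j))
            - ∫ s in Set.Ioc (0:ℝ) t, Function.leftLim (g k) s ∂(μm k j)) := by
      intro k
      rw [integral_sub (hIfp k j t) (hIgp k j t), integral_sub (hIfm k j t) (hIgm k j t)]
      ring
    rw [hfeq j t ht, hgeq j t ht]
    have h1 : ∀ (a b₁ b₂ : ℝ), (a + b₁) - (a + b₂) = b₁ - b₂ := by intro a b₁ b₂; ring
    rw [h1, ← Finset.sum_sub_distrib]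
    exact Finset.sum_congr rfl (fun k _ => (key k).symm)
  -- difference vanishes at 0
  have hD0 : ∀ j, f j 0 - g j 0 = 0 := by
    intro j
    have h0 : (Set.Ioc (0:ℝ) 0) = ∅ := Set.Ioc_self 0
    have hf0 := hfeq j 0 ⟨le_refl _, hT.le⟩
    have hg0 := hgeq j 0 ⟨le_refl _, hT.le⟩
    simp only [h0, Measure.restrict_empty, integral_zero_measure, sub_zero, Finset.sum_const_zero,
      add_zero] at hf0 hg0
    rw [hf0, hg0, sub_self]
  -- the set where the difference vanishes up to time t
  set Z : Set ℝ := {t | t ∈ Set.Icc (0:ℝ) T ∧ ∀ u ∈ Set.Icc (0:ℝ) t, ∀ j, f j u - g j u = 0}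
    with hZdef
  have h0Z : (0:ℝ) ∈ Z := by
    refine ⟨⟨le_refl _, hT.le⟩, ?_⟩
    intro u hu j
    have : u = 0 := le_antisymm hu.2 hu.1
    rw [this]; exact hD0 j
  have hZne : Z.Nonempty := ⟨0, h0Z⟩
  have hZbdd : BddAbove Z := ⟨T, fun z hz => hz.1.2⟩
  set t₀ : ℝ := sSup Z with ht₀def
  have ht₀0 : 0 ≤ t₀ := le_csSup hZbdd h0Z
  have ht₀T : t₀ ≤ T := csSup_le hZne (fun z hz => hz.1.2)
  have hDz : ∀ u, 0 ≤ u → u < t₀ → ∀ j, f j u - g j u = 0 := by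
    intro u hu0 hu j
    obtain ⟨z, hzZ, hz⟩ := exists_lt_of_lt_csSup hZne hu
    exact hzZ.2 u ⟨hu0, hz.le⟩ j
  -- the left limits of the difference vanish on (0, t₀]
  have hLz : ∀ k (s : ℝ), 0 < s → s ≤ t₀ →
      Function.leftLim (f k) s - Function.leftLim (g k) s = 0 := by
    intro k s hs0 hst
    have hsT : s ∈ Set.Ioc (0:ℝ) T := ⟨hs0, hst.trans ht₀T⟩
    have htt : Tendsto (fun u => f k u - g k u) (𝓝[<] s)
        (𝓝 (Function.leftLim (f k) s - Function.leftLim (g k) s)) :=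
      (hfll k s hsT).sub (hgll k s hsT)
    have hb : ∀ u ∈ Set.Ioo (0:ℝ) s, |f k u - g k u| ≤ 0 := by
      intro u hu
      rw [hDz u hu.1.le (lt_of_lt_of_le hu.2 hst) k]
      simp
    have h := absLimLe hs0 htt hb
    exact abs_eq_zero.mp (le_antisymm h (abs_nonneg _))
  -- the difference vanishes at t₀
  have hDt₀ : ∀ j, f j t₀ - g j t₀ = 0 := by
    intro j
    rw [hDeq j t₀ ⟨ht₀0, ht₀T⟩]
    have hint0 : ∀ (k : J) (μ : Measure ℝ),
        (∫ s in Set.Ioc (0:ℝ) t₀,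
          (Function.leftLim (f k) s - Function.leftLim (g k) s) ∂μ) = 0 := by
      intro k μ
      rw [setIntegral_congr_fun measurableSet_Ioc
        (g := fun _ => (0:ℝ)) (fun s hs => hLz k s hs.1 hs.2)]
      simp
    simp [hint0]
  have hD0t : ∀ u ∈ Set.Icc (0:ℝ) t₀, ∀ j, f j u - g j u = 0 := by
    intro u hu j
    rcases lt_or_eq_of_le hu.2 with h | h
    · exact hDz u hu.1 h j
    · rw [h]; exact hDt₀ j
  -- main step : t₀ = T
  have ht₀eq : t₀ = T := by
    by_contra hne
    have ht₀lt : t₀ < T := lt_of_le_of_ne ht₀T hne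
    set N : ℝ := (Fintype.card J : ℝ) with hNdef
    have hN0 : 0 ≤ N := Nat.cast_nonneg _
    set r : ℝ := 1 / (4 * (N + 1)) with hrdef
    have hr0 : 0 < r := by rw [hrdef]; positivity
    -- find a small interval to the right of t₀ with small mass
    have hsmall : ∀ (μ : Measure ℝ), IsFiniteMeasure μ →
        ∀ᶠ n : ℕ in atTop, μ (Set.Ioc t₀ (t₀ + 1/((n:ℝ)+1))) < ENNReal.ofReal r := by
      intro μ hfin
      haveI := hfin
      have hanti : Antitone (fun n : ℕ => Set.Ioc t₀ (t₀ + 1/((n:ℝ)+1))) := by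
        intro m n hmn
        apply Set.Ioc_subset_Ioc_right
        have h1 : (1:ℝ)/((n:ℝ)+1) ≤ 1/((m:ℝ)+1) := by
          apply one_div_le_one_div_of_le (by positivity)
          have : (m:ℝ) ≤ (n:ℝ) := Nat.cast_le.mpr hmn
          linarith
        linarith
      have hint : (⋂ n : ℕ, Set.Ioc t₀ (t₀ + 1/((n:ℝ)+1))) = ∅ := by
        ext x
        simp only [Set.mem_iInter, Set.mem_Ioc, Set.mem_empty_iff_false, iff_false, not_forall]
        by_contra hx
        push_neg at hx
        have hxpos : 0 < x - t₀ := sub_pos.mpr (hx 0).1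
        obtain ⟨n, hn⟩ := exists_nat_gt (1/(x - t₀))
        have h2 : 1 / ((n:ℝ)+1) < x - t₀ := by
          rw [div_lt_iff₀ (by positivity)]
          have h3 := (div_lt_iff₀ hxpos).mp hn
          nlinarith
        have h1 := (hx n).2
        linarith
      have hten := tendsto_measure_iInter_atTop (μ := μ)
        (fun n => measurableSet_Ioc.nullMeasurableSet) hanti ⟨0, measure_ne_top μ _⟩
      rw [hint, measure_empty] at hten
      exact hten.eventually_lt_const (ENNReal.ofReal_pos.mpr hr0)
    have hev : ∀ᶠ n : ℕ in atTop, ∀ k j : J,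
        μp k j (Set.Ioc t₀ (t₀ + 1/((n:ℝ)+1))) < ENNReal.ofReal r ∧
        μm k j (Set.Ioc t₀ (t₀ + 1/((n:ℝ)+1))) < ENNReal.ofReal r := by
      rw [eventually_all]
      intro k
      rw [eventually_all]
      intro j
      exact (hsmall (μp k j) (hμpfin k j)).and (hsmall (μm k j) (hμmfin k j))
    obtain ⟨n, hn⟩ := hev.exists
    set δ : ℝ := min (1/((n:ℝ)+1)) (T - t₀) with hδdef
    have hδ0 : 0 < δ := lt_min (by positivity) (sub_pos.mpr ht₀lt)
    have hδT : t₀ + δ ≤ T := by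
      have := min_le_right (1/((n:ℝ)+1)) (T - t₀)
      rw [hδdef]; linarith
    have hsub : Set.Ioc t₀ (t₀ + δ) ⊆ Set.Ioc t₀ (t₀ + 1/((n:ℝ)+1)) := by
      apply Set.Ioc_subset_Ioc_right
      have := min_le_left (1/((n:ℝ)+1)) (T - t₀)
      rw [hδdef]; linarith
    have hmp : ∀ k j : J, (μp k j (Set.Ioc t₀ (t₀+δ))).toReal ≤ r := by
      intro k j
      exact ENNReal.toReal_le_of_le_ofReal hr0.le
        (le_trans (measure_mono hsub) (hn k j).1.le)
    have hmm : ∀ k j : J, (μm k j (Set.Ioc t₀ (t₀+δ))).toReal ≤ r := by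
      intro k j
      exact ENNReal.toReal_le_of_le_ofReal hr0.le
        (le_trans (measure_mono hsub) (hn k j).2.le)
    -- the iteration
    have hmain : ∀ m : ℕ, ∀ j, ∀ t ∈ Set.Icc (0:ℝ) (t₀ + δ), |f j t - g j t| ≤ B / 2 ^ m := by
      intro m
      induction m with
      | zero =>
        intro j t ht
        have htT : t ∈ Set.Icc (0:ℝ) T := ⟨ht.1, ht.2.trans hδT⟩
        have h1 : |f j t - g j t| ≤ |f j t| + |g j t| := by
          calc |f j t - g j t| = |f j t + -g j t| := by rw [sub_eq_add_neg]
          _ ≤ |f j t| + |-g j t| := abs_add_le _ _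
          _ = |f j t| + |g j t| := by rw [abs_neg]
        have h2 : |f j t| + |g j t| ≤ C + C' := add_le_add (hfC j t htT) (hgC j t htT)
        simpa using h1.trans h2
      | succ m ih =>
        intro j t ht
        rcases le_or_gt t t₀ with hcase | hcase
        · rw [hD0t t ⟨ht.1, hcase⟩ j, abs_zero]
          positivity
        · have htT : t ∈ Set.Icc (0:ℝ) T := ⟨ht.1, ht.2.trans hδT⟩
          rw [hDeq j t htT]
          have hbnd : ∀ k, ∀ s ∈ Set.Ioc t₀ t,
              |Function.leftLim (f k) s - Function.leftLim (g k) s| ≤ B / 2 ^ m := by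
            intro k s hs
            have hs0 : 0 < s := lt_of_le_of_lt ht₀0 hs.1
            have hsT : s ∈ Set.Ioc (0:ℝ) T := ⟨hs0, hs.2.trans htT.2⟩
            refine absLimLe hs0 ((hfll k s hsT).sub (hgll k s hsT)) ?_
            intro u hu
            exact ih k u ⟨hu.1.le, (hu.2.le.trans hs.2).trans ht.2⟩
          have hsplit : ∀ (k : J) (μ : Measure ℝ),
              IntegrableOn (fun s => Function.leftLim (f k) s - Function.leftLim (g k) s)
                (Set.Ioc 0 t) μ →
              (∫ s in Set.Ioc (0:ℝ) t,
                  (Function.leftLim (f k) s - Function.leftLim (g k) s) ∂μ)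
                = ∫ s in Set.Ioc t₀ t,
                  (Function.leftLim (f k) s - Function.leftLim (g k) s) ∂μ := by
            intro k μ hint
            have hunion : Set.Ioc (0:ℝ) t₀ ∪ Set.Ioc t₀ t = Set.Ioc (0:ℝ) t :=
              Set.Ioc_union_Ioc_eq_Ioc ht₀0 hcase.le
            have hz : (∫ s in Set.Ioc (0:ℝ) t₀,
                (Function.leftLim (f k) s - Function.leftLim (g k) s) ∂μ) = 0 := by
              rw [setIntegral_congr_fun measurableSet_Ioc
                (g := fun _ => (0:ℝ)) (fun s hs => hLz k s hs.1 hs.2)]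
              simp
            calc (∫ s in Set.Ioc (0:ℝ) t,
                (Function.leftLim (f k) s - Function.leftLim (g k) s) ∂μ)
                = ∫ s in Set.Ioc (0:ℝ) t₀ ∪ Set.Ioc t₀ t,
                    (Function.leftLim (f k) s - Function.leftLim (g k) s) ∂μ := by rw [hunion]
              _ = (∫ s in Set.Ioc (0:ℝ) t₀,
                    (Function.leftLim (f k) s - Function.leftLim (g k) s) ∂μ)
                  + ∫ s in Set.Ioc t₀ t,
                    (Function.leftLim (f k) s - Function.leftLim (g k) s) ∂μ :=
                setIntegral_union (Set.Ioc_disjoint_Ioc_of_le le_rfl) measurableSet_Ioc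
                  (hint.mono_set (Set.Ioc_subset_Ioc_right hcase.le))
                  (hint.mono_set (Set.Ioc_subset_Ioc_left ht₀0))
              _ = ∫ s in Set.Ioc t₀ t,
                    (Function.leftLim (f k) s - Function.leftLim (g k) s) ∂μ := by
                rw [hz, zero_add]
          have hib : ∀ (k : J) (μ : Measure ℝ), IsFiniteMeasure μ →
              |∫ s in Set.Ioc t₀ t,
                (Function.leftLim (f k) s - Function.leftLim (g k) s) ∂μ|
              ≤ (B / 2 ^ m) * (μ (Set.Ioc t₀ t)).toReal := by
            intro k μ hfinμ
            haveI := hfinμ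
            have h := norm_setIntegral_le_of_norm_le_const (μ := μ) (measure_lt_top μ _)
              (f := fun s => Function.leftLim (f k) s - Function.leftLim (g k) s)
              (C := B / 2 ^ m)
              (fun s hs => by rw [Real.norm_eq_abs]; exact hbnd k s hs)
            rwa [Real.norm_eq_abs] at h
          have hq0 : (0:ℝ) ≤ B / 2 ^ m := by positivity
          have hkbound : ∀ k : J,
              |(∫ s in Set.Ioc (0:ℝ) t,
                  (Function.leftLim (f k) s - Function.leftLim (g k) s) ∂(μp k j))
                - ∫ s in Set.Ioc (0:ℝ) t,
                  (Function.leftLim (f k) s - Function.leftLim (g k) s) ∂(μm k j)|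
              ≤ (B / 2 ^ m) * r + (B / 2 ^ m) * r := by
            intro k
            rw [hsplit k (μp k j) (hISp k j t), hsplit k (μm k j) (hISm k j t)]
            have h1 := hib k (μp k j) (hμpfin k j)
            have h2 := hib k (μm k j) (hμmfin k j)
            have hmp' : (μp k j (Set.Ioc t₀ t)).toReal ≤ r := by
              refine le_trans ?_ (hmp k j)
              haveI := hμpfin k j
              apply ENNReal.toReal_mono (measure_ne_top _ _)
              exact measure_mono (Set.Ioc_subset_Ioc_right ht.2)
            have hmm' : (μm k j (Set.Ioc t₀ t)).toReal ≤ r := by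
              refine le_trans ?_ (hmm k j)
              haveI := hμmfin k j
              apply ENNReal.toReal_mono (measure_ne_top _ _)
              exact measure_mono (Set.Ioc_subset_Ioc_right ht.2)
            have hA : |∫ s in Set.Ioc t₀ t,
                (Function.leftLim (f k) s - Function.leftLim (g k) s) ∂(μp k j)|
                ≤ (B / 2 ^ m) * r :=
              h1.trans (mul_le_mul_of_nonneg_left hmp' hq0)
            have hB' : |∫ s in Set.Ioc t₀ t,
                (Function.leftLim (f k) s - Function.leftLim (g k) s) ∂(μm k j)|
                ≤ (B / 2 ^ m) * r :=
              h2.trans (mul_le_mul_of_nonneg_left hmm' hq0)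
            calc |_ - _| ≤ |_| + |_| := by
                  rw [sub_eq_add_neg]
                  exact (abs_add_le _ _).trans (by rw [abs_neg])
              _ ≤ (B / 2 ^ m) * r + (B / 2 ^ m) * r := add_le_add hA hB'
          calc |∑ k : J, ((∫ s in Set.Ioc (0:ℝ) t,
                  (Function.leftLim (f k) s - Function.leftLim (g k) s) ∂(μp k j))
                - ∫ s in Set.Ioc (0:ℝ) t,
                  (Function.leftLim (f k) s - Function.leftLim (g k) s) ∂(μm k j))|
              ≤ ∑ k : J, |(∫ s in Set.Ioc (0:ℝ) t,
                  (Function.leftLim (f k) s - Function.leftLim (g k) s) ∂(μp k j))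
                - ∫ s in Set.Ioc (0:ℝ) t,
                  (Function.leftLim (f k) s - Function.leftLim (g k) s) ∂(μm k j)| :=
              Finset.abs_sum_le_sum_abs _ _
            _ ≤ ∑ _k : J, ((B / 2 ^ m) * r + (B / 2 ^ m) * r) :=
              Finset.sum_le_sum (fun k _ => hkbound k)
            _ = N * ((B / 2 ^ m) * r + (B / 2 ^ m) * r) := by
              rw [Finset.sum_const, Finset.card_univ, nsmul_eq_mul, hNdef]
            _ ≤ B / 2 ^ (m + 1) := by
              rw [hrdef]
              have hNlt : N / (2 * (N + 1)) ≤ 1 / 2 := by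
                rw [div_le_div_iff₀ (by positivity) (by norm_num)]
                linarith
              have heq : N * ((B / 2 ^ m) * (1 / (4 * (N + 1)))
                  + (B / 2 ^ m) * (1 / (4 * (N + 1))))
                  = (B / 2 ^ m) * (N / (2 * (N + 1))) := by
                field_simp
                ring
              rw [heq]
              have h5 : (B / 2 ^ m) * (N / (2 * (N + 1))) ≤ (B / 2 ^ m) * (1 / 2) :=
                mul_le_mul_of_nonneg_left hNlt hq0
              refine h5.trans (le_of_eq ?_)
              rw [pow_succ]
              ring
    -- pass to the limit m → ∞
    have hzero : ∀ u ∈ Set.Icc (0:ℝ) (t₀ + δ), ∀ j, f j u - g j u = 0 := by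
      intro u hu j
      have hlim : Tendsto (fun m : ℕ => B / 2 ^ m) atTop (𝓝 0) := by
        have h1 := tendsto_pow_atTop_nhds_zero_of_lt_one
          (by norm_num : (0:ℝ) ≤ 1/2) (by norm_num : (1/2:ℝ) < 1)
        have h2 := h1.const_mul B
        rw [mul_zero] at h2
        have h3 : (fun m : ℕ => B / 2 ^ m) = fun m : ℕ => B * (1/2) ^ m := by
          funext m
          rw [one_div, inv_pow, div_eq_mul_inv]
        rw [h3]
        exact h2
      have hle : |f j u - g j u| ≤ 0 :=
        ge_of_tendsto hlim (Eventually.of_forall (fun m => hmain m j u hu))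
      exact abs_eq_zero.mp (le_antisymm hle (abs_nonneg _))
    have hmem : t₀ + δ ∈ Z := ⟨⟨by linarith, hδT⟩, hzero⟩
    have := le_csSup hZbdd hmem
    rw [← ht₀def] at this
    linarith
  -- conclusion
  intro j t ht
  have h2 : t ≤ t₀ := by rw [ht₀eq]; exact ht.2
  have := hD0t t ⟨ht.1, h2⟩ j
  linarith
end
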